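/- arXiv:2204.09372 — 7 statements merged into one kernel-verified Lean document; each statement's English description precedes it below -/
import Mathlib

section
/- Let R be a commutative ring with an involutive automorphism *, and let m and n be even positive integers. Given a_1, …, a_m, b_1, …, b_n ∈ R, define for 1 ≤ i ≤ m/2 and 1 ≤ j ≤ n/2: c_{ij} = a_{2i−1}·b_{2j−1} + a_{2i}·b_{2j} and d_{ij} = a_{2i−1}·b_{2j}* − a_{2i}·b_{2j−1}*. Then Σ_{i=1}^{m/2} Σ_{j=1}^{n/2} (c_{ij}·c_{ij}* + d_{ij}·d_{ij}*) = (Σ_{i=1}^m a_i·a_i*)·(Σ_{j=1}^n b_j·b_j*). -/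
lemma pair_sum {R : Type*} [CommRing R] (f : ℕ → R) (k : ℕ) :
    ∑ i ∈ Finset.Icc 1 k, (f (2 * i - 1) + f (2 * i)) = ∑ i ∈ Finset.Icc 1 (2 * k), f i := by
  induction k with
  | zero => simp
  | succ k ih =>
      rw [Finset.sum_Icc_succ_top (by omega), ih]
      have h1 : 2 * (k + 1) = (2 * k + 1) + 1 := by ring
      rw [h1, Finset.sum_Icc_succ_top (by omega), Finset.sum_Icc_succ_top (by omega)]
      simp
      ring

/-- For even positive m, n and
c_{ij} = a_{2i−1}·b_{2j−1} + a_{2i}·b_{2j},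
d_{ij} = a_{2i−1}·b_{2j}* − a_{2i}·b_{2j−1}*,
one has Σ_{i=1}^{m/2} Σ_{j=1}^{n/2} (c_{ij} c_{ij}* + d_{ij} d_{ij}*)
= (Σ_{i=1}^m a_i a_i*)·(Σ_{j=1}^n b_j b_j*). -/
theorem stmt3 {R : Type*} [CommRing R] (st : R → R)
    (hbij : Function.Bijective st)
    (hadd : ∀ a b : R, st (a + b) = st a + st b)
    (hmul : ∀ a b : R, st (a * b) = st a * st b)
    (hone : st 1 = 1)
    (hinv : ∀ a : R, st (st a) = a)
    (m n : ℕ) (hm : Even m) (hm0 : 0 < m) (hn : Even n) (hn0 : 0 < n)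
    (a b : ℕ → R) (c d : ℕ → ℕ → R)
    (hc : ∀ i ∈ Finset.Icc 1 (m / 2), ∀ j ∈ Finset.Icc 1 (n / 2),
      c i j = a (2 * i - 1) * b (2 * j - 1) + a (2 * i) * b (2 * j))
    (hd : ∀ i ∈ Finset.Icc 1 (m / 2), ∀ j ∈ Finset.Icc 1 (n / 2),
      d i j = a (2 * i - 1) * st (b (2 * j)) - a (2 * i) * st (b (2 * j - 1))) :
    ∑ i ∈ Finset.Icc 1 (m / 2), ∑ j ∈ Finset.Icc 1 (n / 2),
        (c i j * st (c i j) + d i j * st (d i j)) =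
      (∑ i ∈ Finset.Icc 1 m, a i * st (a i)) * (∑ j ∈ Finset.Icc 1 n, b j * st (b j)) := by
  have hzero : st 0 = 0 := by
    have h := hadd 0 0
    rw [add_zero] at h
    linear_combination -h
  have hneg : ∀ x : R, st (-x) = - st x := by
    intro x
    have h := hadd x (-x)
    simp [hzero] at h
    linear_combination -h
  have hsub : ∀ x y : R, st (x - y) = st x - st y := by
    intro x y
    rw [sub_eq_add_neg, hadd, hneg, sub_eq_add_neg]
  have key : ∀ i ∈ Finset.Icc 1 (m / 2), ∀ j ∈ Finset.Icc 1 (n / 2),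
      c i j * st (c i j) + d i j * st (d i j) =
      (a (2 * i - 1) * st (a (2 * i - 1)) + a (2 * i) * st (a (2 * i))) *
      (b (2 * j - 1) * st (b (2 * j - 1)) + b (2 * j) * st (b (2 * j))) := by
    intro i hi j hj
    rw [hc i hi j hj, hd i hi j hj, hadd, hsub, hmul, hmul, hmul, hmul,
      hinv, hinv]
    ring
  rw [Finset.sum_congr rfl (fun i hi => Finset.sum_congr rfl (key i hi))]
  obtain ⟨k, hk⟩ := hm
  obtain ⟨l, hl⟩ := hn
  have hm2 : m / 2 = k := by omega
  have hn2 : n / 2 = l := by omega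
  have hmk : m = 2 * k := by omega
  have hnl : n = 2 * l := by omega
  rw [hm2, hn2, hmk, hnl, ← pair_sum (fun i => a i * st (a i)) k,
    ← pair_sum (fun j => b j * st (b j)) l, Finset.sum_mul_sum]
end

section
/- Let {A, B} be a binary GCA pair of size s_1×⋯×s_r and {C, D} a binary GCA pair of size t_1×⋯×t_r. Define E = (1/2)[A⊗(C+D) + B⊗(C−D)] and F = (1/2)[B*⊗(C+D) − A*⊗(C−D)]. Then {E, F} is a binary GCA pair of size s_1t_1×⋯×s_rt_r; in particular every entry of E and of F equals ±1. -/
/-!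
Write `P = C + D` and `M = C - D`. As `C` and `D` are binary, at each position exactly one of
`P`, `M` is nonzero, and it is `±2`; hence the entries of `E` and `F` are `±1`.

For the correlations, write an index as `a * t + b` with `b` in the box of size `t`. This turns the
cross-correlation of `X ⊗ U` and `Y ⊗ V` at `δ` into a sum over `b` of
`U b * conj (V ((b - δ) mod t))` times a cross-correlation of `X` and `Y`. Two consequences:
complementarity of `{A, B}` gives `R (A ⊗ U) + R (B ⊗ U) = (w A + w B) * R U`, and, since `X*` and
`Y*` correlate like `Y` and `X`, flipping both outer factors swaps them. The latter makes the cross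
terms of `R E` and `R F` cancel, and the former then gives
`R E + R F = (w A + w B) / 4 * (R P + R M) = (w A + w B) / 2 * (R C + R D)`,
which vanishes off the origin.
-/

open scoped BigOperators

/-- An `r`-dimensional complex array, as a complex-valued function on ℤ^r. -/
abbrev Arr (r : ℕ) := (Fin r → ℤ) → ℂ

/-- Index tuple `i` lies in the box `[0, s₁) × ⋯ × [0, s_r)`. -/
def InBox {r : ℕ} (s : Fin r → ℕ) (i : Fin r → ℤ) : Prop :=
  ∀ k, 0 ≤ i k ∧ i k < (s k : ℤ)

/-- The array vanishes outside the box of size `s`. -/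
def SupportedOn {r : ℕ} (s : Fin r → ℕ) (A : Arr r) : Prop :=
  ∀ i, ¬ InBox s i → A i = 0

/-- Aperiodic autocorrelation of an array. -/
noncomputable def autocorr {r : ℕ} (A : Arr r) (δ : Fin r → ℤ) : ℂ :=
  ∑ᶠ i : Fin r → ℤ, A i * (starRingEnd ℂ) (A (i - δ))

/-- Weight of an array: the sum of squared moduli of its entries. -/
noncomputable def weight {r : ℕ} (A : Arr r) : ℝ :=
  ∑ᶠ i : Fin r → ℤ, ‖A i‖ ^ 2

/-- Flipped-and-conjugated array `A*`, relative to size `s`. -/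
noncomputable def flipConj {r : ℕ} (s : Fin r → ℕ) (A : Arr r) : Arr r :=
  fun i => (starRingEnd ℂ) (A fun k => (s k : ℤ) - 1 - i k)

/-- Kronecker product of arrays, where `t` is the size of `B`:
`(A ⊗ B)[i·t + j] = A[i]·B[j]`. -/
noncomputable def kron {r : ℕ} (t : Fin r → ℕ) (A B : Arr r) : Arr r :=
  fun i => A (fun k => i k / (t k : ℤ)) * B (fun k => i k % (t k : ℤ))

/-- Concatenation of `X` (of extent `u` in dimension `i0`) and `Y` in dimension `i0`. -/
noncomputable def concat {r : ℕ} (i0 : Fin r) (u : ℕ) (X Y : Arr r) : Arr r :=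
  fun v => if v i0 < (u : ℤ) then X v else Y (Function.update v i0 (v i0 - u))

/-- A polyphase array of size `s`: supported on the box and all in-box entries
are `N`-th roots of unity for some `N`. -/
def IsPolyphase {r : ℕ} (s : Fin r → ℕ) (A : Arr r) : Prop :=
  SupportedOn s A ∧ ∃ N : ℕ, 0 < N ∧ ∀ i, InBox s i → A i ^ N = 1

/-- A binary array of size `s`: all in-box entries are ±1, zero outside. -/
def IsBinary {r : ℕ} (s : Fin r → ℕ) (A : Arr r) : Prop :=
  SupportedOn s A ∧ ∀ i, InBox s i → A i = 1 ∨ A i = -1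

/-- Entries are zero or of modulus one, supported on the box of size `s`. -/
def IsUnimodZero {r : ℕ} (s : Fin r → ℕ) (A : Arr r) : Prop :=
  SupportedOn s A ∧ ∀ i, InBox s i → A i = 0 ∨ ‖A i‖ = 1

/-- Golay complementarity of a pair: `R_A + R_B = (w(A)+w(B))·Δ`. -/
def ComplementaryPair {r : ℕ} (A B : Arr r) : Prop :=
  ∀ δ : Fin r → ℤ, autocorr A δ + autocorr B δ =
    if δ = 0 then ((weight A + weight B : ℝ) : ℂ) else 0

/-- Golay complementarity of a quad: `R_A + R_B + R_C + R_D = (Σ w)·Δ`. -/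
def ComplementaryQuad {r : ℕ} (A B C D : Arr r) : Prop :=
  ∀ δ : Fin r → ℤ, autocorr A δ + autocorr B δ + autocorr C δ + autocorr D δ =
    if δ = 0 then ((weight A + weight B + weight C + weight D : ℝ) : ℂ) else 0

open Function

section Correlation

variable {r : ℕ}

noncomputable def ccorr (X Y : Arr r) (δ : Fin r → ℤ) : ℂ :=
  ∑ᶠ i, X i * starRingEnd ℂ (Y (i - δ))

theorem autocorr_eq_ccorr (X : Arr r) : autocorr X = ccorr X X := rfl

variable {X Y : Arr r} (δ : Fin r → ℤ)

theorem ccorr_add_left (hX : HasFiniteSupport X) (hY : HasFiniteSupport Y) (Z : Arr r) :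
    ccorr (X + Y) Z δ = ccorr X Z δ + ccorr Y Z δ := by
  simp only [ccorr, Pi.add_apply, add_mul]
  exact finsum_add_distrib (hX.fun_mul_left _) (hY.fun_mul_left _)

theorem ccorr_add_right (hX : HasFiniteSupport X) (Y Z : Arr r) :
    ccorr X (Y + Z) δ = ccorr X Y δ + ccorr X Z δ := by
  simp only [ccorr, Pi.add_apply, map_add, mul_add]
  exact finsum_add_distrib (hX.fun_mul_left _) (hX.fun_mul_left _)

theorem ccorr_neg_left (X Y : Arr r) : ccorr (-X) Y δ = -ccorr X Y δ := by
  simp only [ccorr, Pi.neg_apply, neg_mul, finsum_neg_distrib]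

theorem ccorr_neg_right (X Y : Arr r) : ccorr X (-Y) δ = -ccorr X Y δ := by
  simp only [ccorr, Pi.neg_apply, map_neg, mul_neg, finsum_neg_distrib]

theorem autocorr_smul (c : ℂ) (X : Arr r) :
    autocorr (c • X) δ = c * starRingEnd ℂ c * autocorr X δ := by
  simp only [autocorr, Pi.smul_apply, smul_eq_mul, map_mul, mul_finsum]
  exact finsum_congr fun i => by ring

theorem autocorr_add (hX : HasFiniteSupport X) (hY : HasFiniteSupport Y) :
    autocorr (X + Y) δ = autocorr X δ + autocorr Y δ + (ccorr X Y δ + ccorr Y X δ) := by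
  simp only [autocorr_eq_ccorr, ccorr_add_left δ hX hY, ccorr_add_right δ hX,
    ccorr_add_right δ hY]
  ring

theorem autocorr_sub (hX : HasFiniteSupport X) (hY : HasFiniteSupport Y) :
    autocorr (X - Y) δ = autocorr X δ + autocorr Y δ - (ccorr X Y δ + ccorr Y X δ) := by
  rw [sub_eq_add_neg, autocorr_add δ hX hY.neg]
  simp only [autocorr_eq_ccorr, ccorr_neg_left, ccorr_neg_right, neg_neg]
  ring

theorem autocorr_add_add_autocorr_sub (hX : HasFiniteSupport X) (hY : HasFiniteSupport Y) :
    autocorr (X + Y) δ + autocorr (X - Y) δ = 2 * (autocorr X δ + autocorr Y δ) := by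
  rw [autocorr_add δ hX hY, autocorr_sub δ hX hY]
  ring

theorem autocorr_zero (hX : HasFiniteSupport X) : autocorr X 0 = weight X := by
  have h : ∀ i, X i * starRingEnd ℂ (X (i - 0)) = ((‖X i‖ ^ 2 : ℝ) : ℂ) := fun i => by
    rw [sub_zero, Complex.mul_conj, Complex.normSq_eq_norm_sq]
  rw [autocorr, finsum_congr h, weight]
  exact (Complex.ofRealHom.toAddMonoidHom.map_finsum
    (hX.fun_comp (g := fun z => ‖z‖ ^ 2) (by simp))).symm

theorem complementaryPair_of_autocorr_add_eq_zero (hX : HasFiniteSupport X)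
    (hY : HasFiniteSupport Y) (h : ∀ δ ≠ 0, autocorr X δ + autocorr Y δ = 0) :
    ComplementaryPair X Y := by
  intro δ
  split_ifs with hδ
  · rw [hδ, autocorr_zero hX, autocorr_zero hY, Complex.ofReal_add]
  · exact h δ hδ

end Correlation

section Box

variable {r : ℕ} {s t : Fin r → ℕ}

noncomputable def boxFinset (t : Fin r → ℕ) : Finset (Fin r → ℤ) :=
  Fintype.piFinset fun k => Finset.Ico 0 (t k : ℤ)

theorem mem_boxFinset {i : Fin r → ℤ} : i ∈ boxFinset t ↔ InBox t i := by
  simp [boxFinset, InBox]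

theorem InBox.pos {i : Fin r → ℤ} (h : InBox t i) (k : Fin r) : 0 < t k := by
  have := h k
  omega

theorem inBox_rev_iff {i : Fin r → ℤ} : InBox s (fun k => (s k : ℤ) - 1 - i k) ↔ InBox s i :=
  forall_congr' fun k => by simp only; omega

theorem SupportedOn.hasFiniteSupport {X : Arr r} (hX : SupportedOn t X) : HasFiniteSupport X :=
  (boxFinset t).finite_toSet.subset fun i hi =>
    mem_boxFinset.2 (not_not.1 fun h => hi (hX i h))

theorem SupportedOn.eq_zero_of_not_pos {U : Arr r} (hU : SupportedOn t U)
    (ht : ¬ ∀ k, 0 < t k) : U = 0 := by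
  push Not at ht
  obtain ⟨k, hk⟩ := ht
  exact funext fun i => hU i fun h => (h.pos k).ne' (Nat.le_zero.1 hk)

theorem SupportedOn.add {X Y : Arr r} (hX : SupportedOn t X) (hY : SupportedOn t Y) :
    SupportedOn t (X + Y) :=
  fun i hi => by simp [hX i hi, hY i hi]

theorem SupportedOn.sub {X Y : Arr r} (hX : SupportedOn t X) (hY : SupportedOn t Y) :
    SupportedOn t (X - Y) :=
  fun i hi => by simp [hX i hi, hY i hi]

theorem SupportedOn.flipConj {X : Arr r} (hX : SupportedOn s X) : SupportedOn s (flipConj s X) :=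
  fun i hi => by rw [_root_.flipConj, hX _ (mt inBox_rev_iff.1 hi), map_zero]

theorem IsBinary.flipConj {X : Arr r} (hX : IsBinary s X) : IsBinary s (flipConj s X) :=
  ⟨hX.1.flipConj, fun i hi => by
    rcases hX.2 _ (inBox_rev_iff.2 hi) with h | h <;> simp [_root_.flipConj, h]⟩

theorem IsBinary.neg {X : Arr r} (hX : IsBinary s X) : IsBinary s (-X) :=
  ⟨fun i hi => by simp [hX.1 i hi], fun i hi => by rcases hX.2 i hi with h | h <;> simp [h]⟩

def blockIdx (t : Fin r → ℕ) (i : Fin r → ℤ) : Fin r → ℤ := fun k => i k / (t k : ℤ)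

def offsetIdx (t : Fin r → ℕ) (i : Fin r → ℤ) : Fin r → ℤ := fun k => i k % (t k : ℤ)

theorem offsetIdx_add_mul (a c : Fin r → ℤ) :
    offsetIdx t (fun k => a k * t k + c k) = offsetIdx t c := by
  funext k
  simp only [offsetIdx, add_comm (a k * _), Int.add_mul_emod_self_right]

theorem blockIdx_add_mul (ht : ∀ k, 0 < t k) (a c : Fin r → ℤ) :
    blockIdx t (fun k => a k * t k + c k) = a + blockIdx t c := by
  funext k
  exact Int.mul_add_ediv_right _ _ (by have := ht k; omega)

theorem blockIdx_mul_add_offsetIdx (i : Fin r → ℤ) :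
    (fun k => blockIdx t i k * t k + offsetIdx t i k) = i :=
  funext fun k => Int.ediv_mul_add_emod (i k) (t k)

theorem offsetIdx_of_inBox {c : Fin r → ℤ} (hc : InBox t c) : offsetIdx t c = c :=
  funext fun k => Int.emod_eq_of_lt (hc k).1 (hc k).2

theorem inBox_offsetIdx (ht : ∀ k, 0 < t k) (i : Fin r → ℤ) : InBox t (offsetIdx t i) := by
  intro k
  have htk : (0 : ℤ) < t k := by exact_mod_cast ht k
  exact ⟨Int.emod_nonneg _ htk.ne', Int.emod_lt_of_pos _ htk⟩

theorem blockIdx_eq_zero_iff (ht : ∀ k, 0 < t k) {c : Fin r → ℤ} :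
    blockIdx t c = 0 ↔ InBox t c := by
  refine ⟨fun h => ?_, fun h => funext fun k => Int.ediv_eq_zero_of_lt (h k).1 (h k).2⟩
  have hc := blockIdx_mul_add_offsetIdx (t := t) c
  simp only [h, Pi.zero_apply, zero_mul, zero_add] at hc
  exact hc ▸ inBox_offsetIdx ht c

theorem inBox_blockIdx_offsetIdx {i : Fin r → ℤ} (hi : InBox (fun k => s k * t k) i) :
    InBox s (blockIdx t i) ∧ InBox t (offsetIdx t i) := by
  have ht : ∀ k, 0 < t k := fun k => Nat.pos_of_mul_pos_left (hi.pos k)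
  refine ⟨fun k => ?_, inBox_offsetIdx ht i⟩
  have htk : (0 : ℤ) < t k := by exact_mod_cast ht k
  have hik := (hi k).2
  push_cast at hik
  exact ⟨Int.ediv_nonneg (hi k).1 htk.le, (Int.ediv_lt_iff_lt_mul htk).2 hik⟩

noncomputable def blockEquiv (t : Fin r → ℕ) (ht : ∀ k, 0 < t k) :
    boxFinset t × (Fin r → ℤ) ≃ (Fin r → ℤ) where
  toFun p k := p.2 k * t k + p.1.1 k
  invFun i := (⟨offsetIdx t i, mem_boxFinset.2 (inBox_offsetIdx ht i)⟩, blockIdx t i)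
  left_inv := fun ⟨⟨b, hb⟩, a⟩ => by
    have hb' := mem_boxFinset.1 hb
    simp only [offsetIdx_add_mul, offsetIdx_of_inBox hb', blockIdx_add_mul ht,
      (blockIdx_eq_zero_iff ht).2 hb', add_zero]
  right_inv := blockIdx_mul_add_offsetIdx

section blockEquiv

variable (ht : ∀ k, 0 < t k) (b : boxFinset t) (a : Fin r → ℤ)

theorem blockIdx_blockEquiv : blockIdx t (blockEquiv t ht (b, a)) = a :=
  congrArg Prod.snd ((blockEquiv t ht).symm_apply_apply (b, a))

theorem offsetIdx_blockEquiv : offsetIdx t (blockEquiv t ht (b, a)) = b :=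
  congrArg (Subtype.val ∘ Prod.fst) ((blockEquiv t ht).symm_apply_apply (b, a))

theorem blockEquiv_sub (δ : Fin r → ℤ) :
    blockEquiv t ht (b, a) - δ = fun k => a k * t k + (b.1 - δ) k := by
  funext k
  simp only [blockEquiv, Equiv.coe_fn_mk, Pi.sub_apply]
  ring

theorem blockIdx_blockEquiv_sub (δ : Fin r → ℤ) :
    blockIdx t (blockEquiv t ht (b, a) - δ) = a + blockIdx t (b - δ) := by
  rw [blockEquiv_sub, blockIdx_add_mul ht]

theorem offsetIdx_blockEquiv_sub (δ : Fin r → ℤ) :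
    offsetIdx t (blockEquiv t ht (b, a) - δ) = offsetIdx t (b - δ) := by
  rw [blockEquiv_sub, offsetIdx_add_mul]

end blockEquiv

end Box

section Kronecker

variable {r : ℕ} {s t : Fin r → ℕ}

theorem kron_apply (X U : Arr r) (i : Fin r → ℤ) :
    kron t X U i = X (blockIdx t i) * U (offsetIdx t i) := rfl

theorem kron_neg_left (X U : Arr r) : kron t (-X) U = -kron t X U :=
  funext fun i => by simp only [kron_apply, Pi.neg_apply, neg_mul]

theorem SupportedOn.kron {X U : Arr r} (hX : SupportedOn s X) (hU : SupportedOn t U) :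
    SupportedOn (fun k => s k * t k) (kron t X U) := by
  intro i hi
  by_contra h
  rw [kron_apply, ← ne_eq, mul_ne_zero_iff] at h
  have hq := not_not.1 (mt (hX _) h.1)
  have hm := not_not.1 (mt (hU _) h.2)
  refine hi fun k => ?_
  obtain ⟨hq0, hqs⟩ := hq k
  obtain ⟨hm0, hmt⟩ := hm k
  have hik := Int.ediv_mul_add_emod (i k) (t k)
  simp only [blockIdx, offsetIdx] at hq0 hqs hm0 hmt
  push_cast
  constructor <;> nlinarith

theorem ccorr_kron {X U : Arr r} (hX : HasFiniteSupport X) (hU : SupportedOn t U)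
    (Y V : Arr r) (δ : Fin r → ℤ) :
    ccorr (kron t X U) (kron t Y V) δ = ∑ b ∈ boxFinset t,
      U b * starRingEnd ℂ (V (offsetIdx t (b - δ))) * ccorr X Y (-blockIdx t (b - δ)) := by
  by_cases ht : ∀ k, 0 < t k
  swap
  · have hbox : boxFinset t = ∅ :=
      Finset.eq_empty_of_forall_notMem fun b hb => ht (mem_boxFinset.1 hb).pos
    simp [ccorr, kron_apply, hU.eq_zero_of_not_pos ht, hbox]
  set f : boxFinset t × (Fin r → ℤ) → ℂ := fun p =>
    U p.1 * starRingEnd ℂ (V (offsetIdx t (p.1.1 - δ))) *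
      (X p.2 * starRingEnd ℂ (Y (p.2 - -blockIdx t (p.1.1 - δ))))
  have hf : ∀ p, kron t X U (blockEquiv t ht p) *
      starRingEnd ℂ (kron t Y V (blockEquiv t ht p - δ)) = f p := by
    rintro ⟨b, a⟩
    rw [kron_apply, kron_apply, blockIdx_blockEquiv, offsetIdx_blockEquiv, blockIdx_blockEquiv_sub,
      offsetIdx_blockEquiv_sub, map_mul]
    simp only [f, sub_neg_eq_add]
    ring
  have hf_fin : HasFiniteSupport f :=
    (Set.finite_univ.prod hX).subset fun p hp => ⟨trivial, fun h => hp (by simp [f, h])⟩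
  rw [ccorr, ← finsum_comp_equiv (blockEquiv t ht), finsum_congr hf, finsum_curry f hf_fin,
    finsum_eq_sum_of_fintype, ← Finset.sum_coe_sort (boxFinset t)]
  refine Finset.sum_congr rfl fun b _ => ?_
  rw [ccorr, mul_finsum]

theorem hasFiniteSupport_flipConj {X : Arr r} (hX : HasFiniteSupport X) :
    HasFiniteSupport (flipConj s X) := by
  refine (hX.fun_comp_of_injective (g := fun i k => (s k : ℤ) - 1 - i k) fun i j h =>
    funext fun k => ?_).fun_comp (map_zero (starRingEnd ℂ))
  have := congrFun h k
  simp only at this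
  omega

theorem ccorr_flipConj (X Y : Arr r) (γ : Fin r → ℤ) :
    ccorr (flipConj s X) (flipConj s Y) γ = ccorr Y X γ := by
  rw [ccorr, ← finsum_comp_equiv (Equiv.subLeft (fun k => (s k : ℤ) - 1 + γ k))]
  refine finsum_congr fun j => ?_
  simp only [flipConj, Equiv.subLeft_apply, Complex.conj_conj]
  rw [mul_comm]
  congr 3 <;> funext k <;> simp only [Pi.sub_apply] <;> ring

theorem ccorr_kron_flipConj {X Y U : Arr r} (hX : HasFiniteSupport X) (hY : HasFiniteSupport Y)
    (hU : SupportedOn t U) (V : Arr r) (δ : Fin r → ℤ) :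
    ccorr (kron t (flipConj s X) U) (kron t (flipConj s Y) V) δ =
      ccorr (kron t Y U) (kron t X V) δ := by
  simp only [ccorr_kron (hasFiniteSupport_flipConj hX) hU, ccorr_kron hY hU, ccorr_flipConj]

theorem autocorr_kron_flipConj {X U : Arr r} (hX : HasFiniteSupport X) (hU : SupportedOn t U)
    (δ : Fin r → ℤ) : autocorr (kron t (flipConj s X) U) δ = autocorr (kron t X U) δ :=
  ccorr_kron_flipConj hX hX hU U δ

theorem autocorr_kron_add_autocorr_kron {A B U : Arr r} (hA : HasFiniteSupport A)
    (hB : HasFiniteSupport B) (hAB : ComplementaryPair A B) (hU : SupportedOn t U)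
    (δ : Fin r → ℤ) :
    autocorr (kron t A U) δ + autocorr (kron t B U) δ =
      (weight A + weight B : ℝ) * autocorr U δ := by
  have hsupp : support (fun i => U i * starRingEnd ℂ (U (i - δ))) ⊆ boxFinset t :=
    fun i hi => mem_boxFinset.2 (not_not.1 fun h => hi (by simp [hU i h]))
  rw [autocorr_eq_ccorr, autocorr_eq_ccorr, ccorr_kron hA hU, ccorr_kron hB hU,
    ← Finset.sum_add_distrib, autocorr, finsum_eq_sum_of_support_subset _ hsupp, Finset.mul_sum]
  refine Finset.sum_congr rfl fun b hb => ?_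
  have ht : ∀ k, 0 < t k := (mem_boxFinset.1 hb).pos
  rw [← mul_add, ← autocorr_eq_ccorr, ← autocorr_eq_ccorr, hAB]
  split_ifs with hq <;> rw [neg_eq_zero] at hq
  · rw [offsetIdx_of_inBox ((blockIdx_eq_zero_iff ht).1 hq)]
    ring
  · rw [hU _ (mt (blockIdx_eq_zero_iff ht).2 hq)]
    simp

end Kronecker

section Turyn

variable {r : ℕ} {s t : Fin r → ℕ} {A B C D : Arr r}

/-- Turyn's product of the pairs `{A, B}` and `{C, D}`: `turynFst` and `turynSnd` are the arrays
`E` and `F` of the theorem. -/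
noncomputable def turynFst (t : Fin r → ℕ) (A B C D : Arr r) : Arr r :=
  (1 / 2 : ℂ) • (kron t A (C + D) + kron t B (C - D))

noncomputable def turynSnd (s t : Fin r → ℕ) (A B C D : Arr r) : Arr r :=
  (1 / 2 : ℂ) • (kron t (flipConj s B) (C + D) - kron t (flipConj s A) (C - D))

theorem half_mul_add_mul_sub_eq_one_or {a b c d : ℂ} (ha : a = 1 ∨ a = -1) (hb : b = 1 ∨ b = -1)
    (hc : c = 1 ∨ c = -1) (hd : d = 1 ∨ d = -1) :
    1 / 2 * (a * (c + d) + b * (c - d)) = 1 ∨ 1 / 2 * (a * (c + d) + b * (c - d)) = -1 := by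
  rcases ha with rfl | rfl <;> rcases hb with rfl | rfl <;> rcases hc with rfl | rfl <;>
    rcases hd with rfl | rfl <;> norm_num

theorem isBinary_half_smul_kron_add {X Y : Arr r} (hX : IsBinary s X) (hY : IsBinary s Y)
    (hC : IsBinary t C) (hD : IsBinary t D) :
    IsBinary (fun k => s k * t k) ((1 / 2 : ℂ) • (kron t X (C + D) + kron t Y (C - D))) := by
  refine ⟨fun i hi => ?_, fun i hi => ?_⟩
  · simp [hX.1.kron (hC.1.add hD.1) i hi, hY.1.kron (hC.1.sub hD.1) i hi]
  · obtain ⟨hq, hm⟩ := inBox_blockIdx_offsetIdx hi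
    exact half_mul_add_mul_sub_eq_one_or (hX.2 _ hq) (hY.2 _ hq) (hC.2 _ hm) (hD.2 _ hm)

theorem isBinary_turynFst (hA : IsBinary s A) (hB : IsBinary s B) (hC : IsBinary t C)
    (hD : IsBinary t D) : IsBinary (fun k => s k * t k) (turynFst t A B C D) :=
  isBinary_half_smul_kron_add hA hB hC hD

theorem isBinary_turynSnd (hA : IsBinary s A) (hB : IsBinary s B) (hC : IsBinary t C)
    (hD : IsBinary t D) : IsBinary (fun k => s k * t k) (turynSnd s t A B C D) := by
  rw [turynSnd, sub_eq_add_neg, ← kron_neg_left]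
  exact isBinary_half_smul_kron_add hB.flipConj hA.flipConj.neg hC hD

theorem autocorr_turynFst_add_autocorr_turynSnd (hA : SupportedOn s A) (hB : SupportedOn s B)
    (hAB : ComplementaryPair A B) (hC : SupportedOn t C) (hD : SupportedOn t D)
    (δ : Fin r → ℤ) :
    autocorr (turynFst t A B C D) δ + autocorr (turynSnd s t A B C D) δ =
      (weight A + weight B : ℝ) / 2 * (autocorr C δ + autocorr D δ) := by
  have hP := hC.add hD
  have hM := hC.sub hD
  have fin : ∀ {X U : Arr r}, SupportedOn s X → SupportedOn t U → HasFiniteSupport (kron t X U) :=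
    fun hX hU => (hX.kron hU).hasFiniteSupport
  have hAP := autocorr_kron_add_autocorr_kron hA.hasFiniteSupport hB.hasFiniteSupport hAB hP δ
  have hAM := autocorr_kron_add_autocorr_kron hA.hasFiniteSupport hB.hasFiniteSupport hAB hM δ
  have hCD := autocorr_add_add_autocorr_sub δ hC.hasFiniteSupport hD.hasFiniteSupport
  have hc : (1 / 2 : ℂ) * starRingEnd ℂ (1 / 2) = 1 / 4 := by
    simp [map_ofNat]
    norm_num
  rw [turynFst, turynSnd, autocorr_smul, autocorr_smul, hc, autocorr_add δ (fin hA hP) (fin hB hM),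
    autocorr_sub δ (fin hB.flipConj hP) (fin hA.flipConj hM),
    autocorr_kron_flipConj hB.hasFiniteSupport hP, autocorr_kron_flipConj hA.hasFiniteSupport hM,
    ccorr_kron_flipConj hB.hasFiniteSupport hA.hasFiniteSupport hP,
    ccorr_kron_flipConj hA.hasFiniteSupport hB.hasFiniteSupport hM]
  linear_combination (1 / 4 : ℂ) * hAP + (1 / 4 : ℂ) * hAM +
    ((weight A + weight B : ℝ) : ℂ) / 4 * hCD

end Turyn

/-- From binary GCA pairs {A,B} of size s and {C,D} of size t,
the arrays E = ½[A⊗(C+D) + B⊗(C−D)] and F = ½[B*⊗(C+D) − A*⊗(C−D)] form a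
binary GCA pair of size s₁t₁×⋯×s_r t_r (in particular every entry of E, F is ±1). -/
theorem stmt5 {r : ℕ} (s t : Fin r → ℕ) (A B C D : Arr r)
    (hA : IsBinary s A) (hB : IsBinary s B) (hAB : ComplementaryPair A B)
    (hC : IsBinary t C) (hD : IsBinary t D) (hCD : ComplementaryPair C D)
    (E F : Arr r)
    (hE : E = fun i => (1 / 2 : ℂ) *
      (kron t A (fun j => C j + D j) i + kron t B (fun j => C j - D j) i))
    (hF : F = fun i => (1 / 2 : ℂ) *
      (kron t (flipConj s B) (fun j => C j + D j) i -
        kron t (flipConj s A) (fun j => C j - D j) i)) :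
    IsBinary (fun k => s k * t k) E ∧ IsBinary (fun k => s k * t k) F ∧
      ComplementaryPair E F := by
  have hE' : E = turynFst t A B C D := hE
  have hF' : F = turynSnd s t A B C D := hF
  have hEbin : IsBinary (fun k => s k * t k) E := hE' ▸ isBinary_turynFst hA hB hC hD
  have hFbin : IsBinary (fun k => s k * t k) F := hF' ▸ isBinary_turynSnd hA hB hC hD
  refine ⟨hEbin, hFbin, complementaryPair_of_autocorr_add_eq_zero hEbin.1.hasFiniteSupport
    hFbin.1.hasFiniteSupport fun δ hδ => ?_⟩
  rw [hE', hF', autocorr_turynFst_add_autocorr_turynSnd hA.1 hB.1 hAB hC.1 hD.1, hCD δ, if_neg hδ,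
    mul_zero]
end

section
/- Let {a, b} be a polyphase Golay sequence pair of length L and {c, d} a polyphase Golay sequence pair of length M. Define the 2L×M matrices A and B by: A[i,j] = a[i]·c[j] for 0 ≤ i < L and A[L+i, j] = b[i]·d[j] for 0 ≤ i < L; B[i,j] = −a[i]·conj(d[M−1−j]) for 0 ≤ i < L and B[L+i, j] = b[i]·conj(c[M−1−j]) for 0 ≤ i < L. Then {A, B} is a polyphase GCM pair of size 2L×M. -/
open scoped BigOperators

/-- Aperiodic autocorrelation of a complex sequence (indexed by ℤ). -/
noncomputable def seqAutocorr (a : ℤ → ℂ) (δ : ℤ) : ℂ :=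
  ∑ᶠ i : ℤ, a i * (starRingEnd ℂ) (a (i - δ))

/-- Weight of a sequence. -/
noncomputable def seqWeight (a : ℤ → ℂ) : ℝ :=
  ∑ᶠ i : ℤ, ‖a i‖ ^ 2

/-- Index lies in `[0, L)`. -/
def seqInBox (L : ℕ) (i : ℤ) : Prop := 0 ≤ i ∧ i < (L : ℤ)

/-- A polyphase sequence of length `L`: zero outside `[0, L)` and all entries inside
are `N`-th roots of unity for some `N`. -/
def seqPolyphase (L : ℕ) (a : ℤ → ℂ) : Prop :=
  (∀ i, ¬ seqInBox L i → a i = 0) ∧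
    ∃ N : ℕ, 0 < N ∧ ∀ i, seqInBox L i → a i ^ N = 1

/-- Aperiodic autocorrelation of a complex matrix (indexed by ℤ × ℤ). -/
noncomputable def matAutocorr (A : ℤ → ℤ → ℂ) (δ₁ δ₂ : ℤ) : ℂ :=
  ∑ᶠ (i : ℤ) (j : ℤ), A i j * (starRingEnd ℂ) (A (i - δ₁) (j - δ₂))

/-- Weight of a matrix. -/
noncomputable def matWeight (A : ℤ → ℤ → ℂ) : ℝ :=
  ∑ᶠ (i : ℤ) (j : ℤ), ‖A i j‖ ^ 2

/-- Index pair lies in `[0, m) × [0, n)`. -/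
def matInBox (m n : ℕ) (i j : ℤ) : Prop :=
  0 ≤ i ∧ i < (m : ℤ) ∧ 0 ≤ j ∧ j < (n : ℤ)

/-- A polyphase matrix of size `m × n`. -/
def matPolyphase (m n : ℕ) (A : ℤ → ℤ → ℂ) : Prop :=
  (∀ i j, ¬ matInBox m n i j → A i j = 0) ∧
    ∃ N : ℕ, 0 < N ∧ ∀ i j, matInBox m n i j → A i j ^ N = 1

/-! Both `A` and `B` are sums of two outer products `p ⊗ q + p' ⊗ q'` (the second row block
shifted down by `L`), and the autocorrelation of such a sum expands into products of
one-dimensional cross-correlations. Reversing and conjugating `c` and `d` swaps the arguments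
of their cross-correlations, so the cross terms of `A` and `B` cancel and
`R_A + R_B = (R_a + R_b)(R_c + R_d)`. Off the origin one factor vanishes since `{a, b}` and
`{c, d}` are complementary; at the origin both sides are the total weight. -/

open Function Finset

namespace Golay

noncomputable def crossCorr (p q : ℤ → ℂ) (δ : ℤ) : ℂ :=
  ∑ᶠ i : ℤ, p i * starRingEnd ℂ (q (i - δ))

def outer (p q : ℤ → ℂ) : ℤ → ℤ → ℂ := fun i j => p i * q j

def vstack (L : ℕ) (X Y : ℤ → ℤ → ℂ) : ℤ → ℤ → ℂ :=
  fun i j => if i < (L : ℤ) then X i j else Y (i - L) j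

def conjReverse (K : ℤ) (p : ℤ → ℂ) : ℤ → ℂ := fun j => starRingEnd ℂ (p (K - j))

theorem seqInBox_reverse_iff {M : ℕ} {j : ℤ} : seqInBox M ((M : ℤ) - 1 - j) ↔ seqInBox M j := by
  unfold seqInBox; omega

theorem matInBox_iff {m n : ℕ} {i j : ℤ} : matInBox m n i j ↔ seqInBox m i ∧ seqInBox n j := by
  unfold matInBox seqInBox; tauto

theorem hasFiniteSupport_of_seqInBox {L : ℕ} {p : ℤ → ℂ} (h : ∀ i, ¬ seqInBox L i → p i = 0) :
    p.HasFiniteSupport :=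
  (Set.finite_Ico (0 : ℤ) L).subset fun i hi => by_contra fun hn => hi (h i hn)

theorem seqPolyphase.neg {L : ℕ} {p : ℤ → ℂ} (h : seqPolyphase L p) : seqPolyphase L (-p) := by
  obtain ⟨h0, N, hN, h1⟩ := h
  refine ⟨fun i hi => by simp [h0 i hi], 2 * N, by positivity, fun i hi => ?_⟩
  rw [Pi.neg_apply, (even_two_mul N).neg_pow, pow_mul', h1 i hi, one_pow]

theorem seqPolyphase.conjReverse {M : ℕ} {p : ℤ → ℂ} (h : seqPolyphase M p) :
    seqPolyphase M (conjReverse (M - 1) p) := by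
  obtain ⟨h0, N, hN, h1⟩ := h
  refine ⟨fun j hj => ?_, N, hN, fun j hj => ?_⟩
  · rw [Golay.conjReverse, h0 _ (mt seqInBox_reverse_iff.mp hj), map_zero]
  · rw [Golay.conjReverse, ← map_pow, h1 _ (seqInBox_reverse_iff.mpr hj), map_one]

theorem seqPolyphase.outer {L M : ℕ} {p q : ℤ → ℂ} (hp : seqPolyphase L p)
    (hq : seqPolyphase M q) : matPolyphase L M (outer p q) := by
  obtain ⟨hp0, Np, hNp, hp1⟩ := hp
  obtain ⟨hq0, Nq, hNq, hq1⟩ := hq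
  refine ⟨fun i j hij => ?_, Np * Nq, by positivity, fun i j hij => ?_⟩
  · rw [matInBox_iff, not_and_or] at hij
    rcases hij with hi | hj
    · rw [Golay.outer, hp0 i hi, zero_mul]
    · rw [Golay.outer, hq0 j hj, mul_zero]
  · rw [matInBox_iff] at hij
    rw [Golay.outer, mul_pow, pow_mul, hp1 i hij.1, pow_mul', hq1 j hij.2, one_pow, one_pow,
      one_mul]

theorem matPolyphase.vstack {L L' M : ℕ} {X Y : ℤ → ℤ → ℂ} (hX : matPolyphase L M X)
    (hY : matPolyphase L' M Y) : matPolyphase (L + L') M (vstack L X Y) := by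
  obtain ⟨hX0, NX, hNX, hX1⟩ := hX
  obtain ⟨hY0, NY, hNY, hY1⟩ := hY
  refine ⟨fun i j hij => ?_, NX * NY, by positivity, fun i j hij => ?_⟩ <;>
    unfold Golay.vstack <;> unfold matInBox at * <;> split_ifs with hi
  · exact hX0 i j fun h => hij (by omega)
  · exact hY0 _ j fun h => hij (by omega)
  · rw [pow_mul, hX1 i j (by omega), one_pow]
  · rw [pow_mul', hY1 _ j (by omega), one_pow]

theorem finsum_finsum_sum_mul {α β ι R : Type*} [NonUnitalNonAssocSemiring R] (s : Finset ι)
    (f : ι → α → R) (g : ι → β → R) (hf : ∀ k ∈ s, (f k).HasFiniteSupport)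
    (hg : ∀ k ∈ s, (g k).HasFiniteSupport) :
    ∑ᶠ (a : α) (b : β), ∑ k ∈ s, f k a * g k b = ∑ k ∈ s, (∑ᶠ a, f k a) * ∑ᶠ b, g k b :=
  calc ∑ᶠ (a : α) (b : β), ∑ k ∈ s, f k a * g k b
      = ∑ᶠ a : α, ∑ k ∈ s, f k a * ∑ᶠ b, g k b := finsum_congr fun a => by
        rw [finsum_sum_comm s _ fun k hk => (hg k hk).fun_mul_right _]
        exact sum_congr rfl fun k hk => (mul_finsum' _ _ (hg k hk)).symm
    _ = ∑ k ∈ s, ∑ᶠ a : α, f k a * ∑ᶠ b, g k b :=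
        finsum_sum_comm s _ fun k hk => (hf k hk).fun_mul_left _
    _ = ∑ k ∈ s, (∑ᶠ a, f k a) * ∑ᶠ b, g k b :=
        sum_congr rfl fun k hk => (finsum_mul' _ _ (hf k hk)).symm

theorem matAutocorr_sum_outer {ι : Type*} (s : Finset ι) (u v : ι → ℤ → ℂ)
    (hu : ∀ k ∈ s, (u k).HasFiniteSupport) (hv : ∀ k ∈ s, (v k).HasFiniteSupport) (δ₁ δ₂ : ℤ) :
    matAutocorr (fun i j => ∑ k ∈ s, outer (u k) (v k) i j) δ₁ δ₂ =
      ∑ k ∈ s, ∑ l ∈ s, crossCorr (u k) (u l) δ₁ * crossCorr (v k) (v l) δ₂ := by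
  rw [← sum_product' (f := fun k l => crossCorr (u k) (u l) δ₁ * crossCorr (v k) (v l) δ₂)]
  refine Eq.trans ?_ (finsum_finsum_sum_mul (s ×ˢ s)
    (fun kl i => u kl.1 i * starRingEnd ℂ (u kl.2 (i - δ₁)))
    (fun kl j => v kl.1 j * starRingEnd ℂ (v kl.2 (j - δ₂)))
    (fun kl hkl => (hu _ (mem_product.mp hkl).1).fun_mul_left _)
    (fun kl hkl => (hv _ (mem_product.mp hkl).1).fun_mul_left _))
  refine finsum_congr fun i => finsum_congr fun j => ?_
  simp only [outer, map_sum, map_mul, sum_mul_sum, sum_product]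
  exact sum_congr rfl fun k _ => sum_congr rfl fun l _ => mul_mul_mul_comm _ _ _ _

theorem matAutocorr_outer_add_outer {p q p' q' : ℤ → ℂ} (hp : p.HasFiniteSupport)
    (hq : q.HasFiniteSupport) (hp' : p'.HasFiniteSupport) (hq' : q'.HasFiniteSupport)
    (δ₁ δ₂ : ℤ) :
    matAutocorr (fun i j => outer p q i j + outer p' q' i j) δ₁ δ₂ =
      crossCorr p p δ₁ * crossCorr q q δ₂ + crossCorr p p' δ₁ * crossCorr q q' δ₂ +
        (crossCorr p' p δ₁ * crossCorr q' q δ₂ + crossCorr p' p' δ₁ * crossCorr q' q' δ₂) := by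
  simpa [Fin.sum_univ_two] using
    matAutocorr_sum_outer univ ![p, p'] ![q, q'] (by simp [Fin.forall_fin_two, hp, hp'])
      (by simp [Fin.forall_fin_two, hq, hq']) δ₁ δ₂

theorem crossCorr_self (p : ℤ → ℂ) : crossCorr p p = seqAutocorr p := rfl

theorem crossCorr_neg_left (p q : ℤ → ℂ) (δ : ℤ) : crossCorr (-p) q δ = -crossCorr p q δ := by
  simp [crossCorr, finsum_neg_distrib]

theorem crossCorr_neg_right (p q : ℤ → ℂ) (δ : ℤ) : crossCorr p (-q) δ = -crossCorr p q δ := by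
  simp [crossCorr, finsum_neg_distrib]

theorem crossCorr_comp_sub (p q : ℤ → ℂ) (T δ : ℤ) :
    crossCorr (fun i => p (i - T)) (fun i => q (i - T)) δ = crossCorr p q δ := by
  simp_rw [crossCorr, sub_right_comm _ δ T]
  exact finsum_comp_equiv (Equiv.subRight T) (f := fun i => p i * starRingEnd ℂ (q (i - δ)))

theorem crossCorr_conjReverse (p q : ℤ → ℂ) (K δ : ℤ) :
    crossCorr (conjReverse K p) (conjReverse K q) δ = crossCorr q p δ := by
  rw [crossCorr, ← finsum_comp_equiv (Equiv.subLeft (K + δ))]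
  refine finsum_congr fun m => ?_
  simp only [conjReverse, Equiv.subLeft_apply, RCLike.conj_conj]
  rw [mul_comm, show K - (K + δ - m - δ) = m by ring, show K - (K + δ - m) = m - δ by ring]

theorem vstack_outer {L : ℕ} {p p' : ℤ → ℂ} (hp : ∀ i, (L : ℤ) ≤ i → p i = 0)
    (hp' : ∀ i, i < 0 → p' i = 0) (q q' : ℤ → ℂ) :
    vstack L (outer p q) (outer p' q') =
      fun i j => outer p q i j + outer (fun i => p' (i - L)) q' i j := by
  funext i j
  by_cases hi : i < (L : ℤ)
  · simp [vstack, outer, hi, hp' (i - L) (by omega)]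
  · simp [vstack, outer, hi, hp i (by omega)]

theorem matAutocorr_vstack_add_matAutocorr_vstack {L : ℕ} {a b c d : ℤ → ℂ}
    (ha : ∀ i, ¬ seqInBox L i → a i = 0) (hb : ∀ i, ¬ seqInBox L i → b i = 0)
    (hc : c.HasFiniteSupport) (hd : d.HasFiniteSupport) (K δ₁ δ₂ : ℤ) :
    matAutocorr (vstack L (outer a c) (outer b d)) δ₁ δ₂ +
        matAutocorr (vstack L (outer (-a) (conjReverse K d)) (outer b (conjReverse K c))) δ₁ δ₂ =
      (seqAutocorr a δ₁ + seqAutocorr b δ₁) * (seqAutocorr c δ₂ + seqAutocorr d δ₂) := by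
  have ha_top : ∀ i, (L : ℤ) ≤ i → a i = 0 := fun i hi => ha i fun h => by
    unfold seqInBox at h; omega
  have hb_bot : ∀ i, i < 0 → b i = 0 := fun i hi => hb i fun h => by
    unfold seqInBox at h; omega
  have hfa := hasFiniteSupport_of_seqInBox ha
  have hfb_shift : (fun i => b (i - L)).HasFiniteSupport :=
    (hasFiniteSupport_of_seqInBox hb).fun_comp_of_injective (sub_left_injective)
  have hfc : (conjReverse K c).HasFiniteSupport :=
    (hc.fun_comp_of_injective (sub_right_injective)).fun_comp (map_zero _)
  have hfd : (conjReverse K d).HasFiniteSupport :=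
    (hd.fun_comp_of_injective (sub_right_injective)).fun_comp (map_zero _)
  rw [vstack_outer ha_top hb_bot, vstack_outer (fun i hi => by simp [ha_top i hi]) hb_bot,
    matAutocorr_outer_add_outer hfa hc hfb_shift hd,
    matAutocorr_outer_add_outer hfa.neg hfd hfb_shift hfc]
  simp only [crossCorr_comp_sub, crossCorr_conjReverse, crossCorr_neg_left, crossCorr_neg_right,
    neg_neg, crossCorr_self]
  ring

theorem matWeight_eq_matAutocorr_zero (A : ℤ → ℤ → ℂ) :
    ((matWeight A : ℝ) : ℂ) = matAutocorr A 0 0 := by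
  have hcast (f : ℤ → ℝ) : ((∑ᶠ i, f i : ℝ) : ℂ) = ∑ᶠ i, (f i : ℂ) :=
    Complex.ofRealHom.toAddMonoidHom.map_finsum_of_injective Complex.ofReal_injective f
  simp only [matWeight, matAutocorr, hcast, sub_zero, Complex.mul_conj']
  norm_cast

end Golay

open Golay

/-- from polyphase Golay sequence pairs {a,b} of length L and {c,d} of
length M, the 2L×M matrices A, B with A[i,j] = a[i]c[j], A[L+i,j] = b[i]d[j],
B[i,j] = −a[i]·conj(d[M−1−j]), B[L+i,j] = b[i]·conj(c[M−1−j]) (0 ≤ i < L) form a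
polyphase GCM pair of size 2L×M. -/
theorem stmt6 (L M : ℕ) (a b c d : ℤ → ℂ)
    (ha : seqPolyphase L a) (hb : seqPolyphase L b)
    (hab : ∀ δ : ℤ, seqAutocorr a δ + seqAutocorr b δ =
      if δ = 0 then ((seqWeight a + seqWeight b : ℝ) : ℂ) else 0)
    (hc : seqPolyphase M c) (hd : seqPolyphase M d)
    (hcd : ∀ δ : ℤ, seqAutocorr c δ + seqAutocorr d δ =
      if δ = 0 then ((seqWeight c + seqWeight d : ℝ) : ℂ) else 0)
    (A B : ℤ → ℤ → ℂ)
    (hA : A = fun i j => if i < (L : ℤ) then a i * c j else b (i - L) * d j)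
    (hB : B = fun i j => if i < (L : ℤ) then
        -a i * (starRingEnd ℂ) (d ((M : ℤ) - 1 - j))
      else b (i - L) * (starRingEnd ℂ) (c ((M : ℤ) - 1 - j))) :
    matPolyphase (2 * L) M A ∧ matPolyphase (2 * L) M B ∧
      ∀ δ₁ δ₂ : ℤ, matAutocorr A δ₁ δ₂ + matAutocorr B δ₁ δ₂ =
        if δ₁ = 0 ∧ δ₂ = 0 then ((matWeight A + matWeight B : ℝ) : ℂ) else 0 := by
  obtain rfl : A = vstack L (outer a c) (outer b d) := hA
  obtain rfl : B = vstack L (outer (-a) (conjReverse (M - 1) d))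
      (outer b (conjReverse (M - 1) c)) := hB
  rw [two_mul]
  refine ⟨(ha.outer hc).vstack (hb.outer hd),
    (ha.neg.outer hd.conjReverse).vstack (hb.outer hc.conjReverse), fun δ₁ δ₂ => ?_⟩
  split_ifs with hδ
  · obtain ⟨rfl, rfl⟩ := hδ
    rw [Complex.ofReal_add, matWeight_eq_matAutocorr_zero, matWeight_eq_matAutocorr_zero]
  rw [matAutocorr_vstack_add_matAutocorr_vstack ha.1 hb.1 (hasFiniteSupport_of_seqInBox hc.1)
    (hasFiniteSupport_of_seqInBox hd.1)]
  rcases not_and_or.mp hδ with h | h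
  · rw [hab, if_neg h, zero_mul]
  · rw [hcd, if_neg h, mul_zero]
end

section
/- Let {A, B} be a nontrivial binary GCA pair of size s_1×⋯×s_r (nontrivial meaning s_k > 1 for at least one k). Then for every index tuple i = (i_1,…,i_r) with 0 ≤ i_k ≤ s_k−1 for all k, one has A[s_1−1−i_1,…,s_r−1−i_r]·A[i_1,…,i_r]·B[s_1−1−i_1,…,s_r−1−i_r]·B[i_1,…,i_r] = −1. -/
open scoped BigOperators

/-!
Arrays supported on the box are elements of the group ring `ℤ[ℤ^r]`, and `R_A(δ)` is the
coefficient of `z^δ` in `A(z) A(z⁻¹)`. Write `A = H - 2α`, `B = H - 2β`, where `H` is the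
indicator of the box and `α`, `β` those of the `-1` entries. Complementarity says
`A(z) A(z⁻¹) + B(z) B(z⁻¹) = 2N` with `N = s₁ ⋯ s_r`; dividing by `2`, multiplying by
`z^(s-1)` (which turns `H(z⁻¹)` into `H(z)`) and reducing mod `2` gives, with `W = α + β`,
`H · (H + W + z^(s-1) W(z⁻¹)) = N z^(s-1)` in `𝔽₂[ℤ^r]`.
Evaluating at `z_k = ω`, a root of `1 + x + ⋯ + x^(s_k - 1)` for some `s_k > 1`, kills `H`,
so `N` is even. Since `𝔽₂[ℤ^r]` is a domain and `H ≠ 0`, the second factor vanishes: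
`W(i) + W(s-1-i) = 1` in `𝔽₂` on the box, which is the claim because `A(i) B(i) = (-1)^W(i)`.
-/

open Finset AddMonoidAlgebra

section GroupRing

variable {R G : Type*}

noncomputable def ofFinset [Semiring R] (t : Finset G) : R[G] := ∑ g ∈ t, single g 1

lemma coeff_ofFinset [Semiring R] [DecidableEq G] (t : Finset G) (g : G) :
    (ofFinset t : R[G]).coeff g = if g ∈ t then 1 else 0 := by
  simp [ofFinset, AddMonoidAlgebra.coeff_sum, Finsupp.single_apply]

lemma mapRingHom_ofFinset {S : Type*} [Semiring R] [Semiring S] [AddMonoid G] (f : R →+* S)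
    (t : Finset G) : mapRingHom G f (ofFinset t) = ofFinset t := by
  simp [ofFinset]

variable [CommRing R] [AddCommGroup G]

noncomputable def invert : R[G] →+* R[G] := mapDomainRingHom R negAddMonoidHom

lemma coeff_invert (x : R[G]) (g : G) : (invert x).coeff g = x.coeff (-g) := by
  rw [← neg_neg g, invert, mapDomainRingHom_apply, coeff_mapDomain]
  exact (Finsupp.mapDomain_apply neg_injective _ _).trans (by rw [neg_neg])

lemma coeff_mul_invert (x : R[G]) (δ : G) :
    (x * invert x).coeff δ = ∑ g ∈ x.coeff.support, x.coeff g * x.coeff (g - δ) := by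
  rw [coeff_mul_apply_left, Finsupp.sum]
  exact sum_congr rfl fun g _ => by rw [coeff_invert, neg_add', neg_neg]

lemma eq_zero_of_two_mul_eq_zero {X : ℤ[G]} (h : 2 * X = 0) : X = 0 := by
  ext g
  have := congrArg (·.coeff g) h
  simp only [two_mul, coeff_add, Finsupp.add_apply, coeff_zero, Finsupp.coe_zero,
    Pi.zero_apply] at this ⊢
  omega

lemma exists_mul_eq_natCast_mul_add_two_mul {H α β z : ℤ[G]} {N : ℕ} (hz : z * invert H = H)
    (h : (H - 2 * α) * invert (H - 2 * α) + (H - 2 * β) * invert (H - 2 * β)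
      = 2 * (N : ℤ[G])) :
    ∃ Y, H * (H + (α + β) + z * invert (α + β)) = N * z + 2 * Y := by
  simp only [map_sub, map_mul, map_add, map_ofNat] at h ⊢
  have hX : 2 * (H * (H - (α + β) - z * (invert α + invert β))
      + 2 * z * (α * invert α + β * invert β) - N * z) = 0 := by
    linear_combination z * h + (2 * (α + β) - 2 * H) * hz
  refine ⟨H * (α + β + z * (invert α + invert β))
    - z * (α * invert α + β * invert β), ?_⟩
  linear_combination eq_zero_of_two_mul_eq_zero hX

end GroupRing

section EvalCoord

variable {ι R K : Type*} [CommSemiring R] [Field K] [Algebra R K]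

noncomputable def evalCoord (u : Kˣ) (k : ι) : R[ι → ℤ] →ₐ[R] K :=
  lift R K (ι → ℤ) <| (Units.coeHom K).comp <| (zpowersHom Kˣ u).comp <|
    AddMonoidHom.toMultiplicative (Pi.evalAddMonoidHom (fun _ => ℤ) k)

lemma evalCoord_single (u : Kˣ) (k : ι) (g : ι → ℤ) (c : R) :
    evalCoord u k (single g c) = c • ((u : K) ^ g k) := by
  simp [evalCoord, lift_single]

end EvalCoord

open Polynomial in
lemma IsAlgClosed.exists_ne_zero_geom_sum_eq_zero {K : Type*} [Field K] [IsAlgClosed K]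
    {n : ℕ} (hn : 2 ≤ n) : ∃ ω : K, ω ≠ 0 ∧ ∑ i ∈ range n, ω ^ i = 0 := by
  obtain ⟨ω, hω⟩ := IsAlgClosed.exists_root (cyclotomic n K)
    (by rw [degree_cyclotomic]; exact_mod_cast (Nat.totient_pos.2 (by omega)).ne')
  have hgeom := eval_eq_zero_of_dvd_of_eval_eq_zero
    (cyclotomic_dvd_geom_sum_of_dvd K dvd_rfl (by omega)) hω
  rw [eval_geom_sum] at hgeom
  refine ⟨ω, ?_, hgeom⟩
  rintro rfl
  simp at hgeom
  omega

noncomputable def signBit (x : ℂ) : ZMod 2 := if x = -1 then 1 else 0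

lemma signBit_one : signBit 1 = 0 := by norm_num [signBit]

lemma signBit_neg_one : signBit (-1) = 1 := by simp [signBit]

lemma mul_eq_neg_one_of_signBit {a b c d : ℂ} (ha : a = 1 ∨ a = -1) (hb : b = 1 ∨ b = -1)
    (hc : c = 1 ∨ c = -1) (hd : d = 1 ∨ d = -1)
    (h : 1 + (signBit a + signBit b) + (signBit c + signBit d) = 0) :
    c * a * d * b = -1 := by
  rcases ha with rfl | rfl <;> rcases hb with rfl | rfl <;> rcases hc with rfl | rfl <;>
    rcases hd with rfl | rfl <;> simp only [signBit_one, signBit_neg_one] at h <;>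
    norm_num <;> revert h <;> decide

section Box

variable {r : ℕ} {s : Fin r → ℕ}

noncomputable def indexBox (s : Fin r → ℕ) : Finset (Fin r → ℤ) :=
  Fintype.piFinset fun k => Ico 0 (s k : ℤ)

lemma mem_indexBox {i : Fin r → ℤ} : i ∈ indexBox s ↔ InBox s i := by
  simp [indexBox, InBox]

def corner (s : Fin r → ℕ) : Fin r → ℤ := fun k => s k - 1

lemma corner_sub_mem_indexBox {i : Fin r → ℤ} (hi : i ∈ indexBox s) :
    corner s - i ∈ indexBox s := by
  rw [mem_indexBox] at hi ⊢
  intro k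
  have := hi k
  simp only [Pi.sub_apply, corner]
  omega

lemma corner_sub_mem_indexBox_iff {i : Fin r → ℤ} :
    corner s - i ∈ indexBox s ↔ i ∈ indexBox s :=
  ⟨fun h => sub_sub_cancel (corner s) i ▸ corner_sub_mem_indexBox h, corner_sub_mem_indexBox⟩

lemma single_corner_mul_invert_ofFinset_indexBox (R : Type*) [CommRing R] (s : Fin r → ℕ) :
    single (corner s) (1 : R) * invert (ofFinset (indexBox s)) = ofFinset (indexBox s) := by
  classical
  ext g
  simp only [coeff_single_mul_apply, one_mul, coeff_invert, coeff_ofFinset, neg_add, neg_neg,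
    ← sub_eq_add_neg, corner_sub_mem_indexBox_iff]

lemma evalCoord_ofFinset_indexBox {R K : Type*} [CommSemiring R] [Field K] [Algebra R K]
    (u : Kˣ) {k : Fin r} (hu : ∑ i ∈ range (s k), (u : K) ^ i = 0) :
    evalCoord u k (ofFinset (indexBox s) : R[Fin r → ℤ]) = 0 := by
  classical
  have hk : ∑ t ∈ Ico (0 : ℤ) (s k), (u : K) ^ t = 0 := by
    rw [Int.Ico_eq_finset_map, sum_map]
    simpa using hu
  calc evalCoord u k (ofFinset (indexBox s) : R[Fin r → ℤ])
      = ∑ g ∈ indexBox s, ∏ j, if j = k then (u : K) ^ g j else 1 := by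
        simp [ofFinset, evalCoord_single]
    _ = ∏ j, ∑ t ∈ Ico (0 : ℤ) (s j), if j = k then (u : K) ^ t else 1 :=
        (prod_univ_sum (fun j => Ico (0 : ℤ) (s j))
          fun j t => if j = k then (u : K) ^ t else 1).symm
    _ = 0 := prod_eq_zero (mem_univ k) (by simpa using hk)

end Box

section Binary

variable {r : ℕ} {s : Fin r → ℕ} {A B : Arr r}

noncomputable def minusOnes (s : Fin r → ℕ) (A : Arr r) : ℤ[Fin r → ℤ] :=
  ofFinset {g ∈ indexBox s | A g = -1}

noncomputable def intLift (s : Fin r → ℕ) (A : Arr r) : ℤ[Fin r → ℤ] :=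
  ofFinset (indexBox s) - 2 * minusOnes s A

lemma intCast_coeff_minusOnes {g : Fin r → ℤ} (hg : g ∈ indexBox s) :
    ((minusOnes s A).coeff g : ZMod 2) = signBit (A g) := by
  classical
  by_cases h : A g = -1 <;> simp [minusOnes, coeff_ofFinset, hg, signBit, h]

lemma IsBinary.intCast_coeff_intLift (hA : IsBinary s A) (g : Fin r → ℤ) :
    ((intLift s A).coeff g : ℂ) = A g := by
  classical
  rw [intLift, two_mul, coeff_sub, coeff_add, minusOnes]
  simp only [Finsupp.sub_apply, Finsupp.add_apply, coeff_ofFinset, mem_filter]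
  by_cases hg : InBox s g
  · rcases hA.2 g hg with h | h <;> norm_num [h, mem_indexBox.2 hg]
  · simp [hA.1 g hg, mem_indexBox, hg]

lemma IsBinary.weight_eq (hA : IsBinary s A) : weight A = #(indexBox s) := by
  have hsupp : Function.support (fun g => ‖A g‖ ^ 2) ⊆ indexBox s := fun g hg => by
    by_contra h
    exact hg (by simp [hA.1 g (mem_indexBox.not.1 h)])
  rw [weight, finsum_eq_finsetSum_of_support_subset _ hsupp, card_eq_sum_ones, Nat.cast_sum]
  refine sum_congr rfl fun g hg => ?_
  rcases hA.2 g (mem_indexBox.1 hg) with h | h <;> simp [h]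

lemma autocorr_intCast (x : ℤ[Fin r → ℤ]) (δ : Fin r → ℤ) :
    autocorr (fun g => (x.coeff g : ℂ)) δ = ((x * invert x).coeff δ : ℂ) := by
  have hsupp : Function.support (fun g => (x.coeff g : ℂ) * (starRingEnd ℂ) (x.coeff (g - δ)))
      ⊆ x.coeff.support := fun g hg => by
    by_contra h
    exact hg (by simp [Finsupp.notMem_support_iff.1 h])
  rw [autocorr, finsum_eq_finsetSum_of_support_subset _ hsupp, coeff_mul_invert]
  push_cast
  simp

lemma ComplementaryPair.intLift_identity (hA : IsBinary s A) (hB : IsBinary s B)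
    (hAB : ComplementaryPair A B) :
    intLift s A * invert (intLift s A) + intLift s B * invert (intLift s B)
      = 2 * (#(indexBox s) : ℤ[Fin r → ℤ]) := by
  classical
  ext δ
  apply Int.cast_injective (α := ℂ)
  have h := hAB δ
  rw [hA.weight_eq, hB.weight_eq, ← funext hA.intCast_coeff_intLift,
    ← funext hB.intCast_coeff_intLift, autocorr_intCast, autocorr_intCast] at h
  rw [coeff_add, Finsupp.add_apply, Int.cast_add, h, show (2 : ℤ[Fin r → ℤ]) * #(indexBox s) =
    ((2 * #(indexBox s) : ℕ) : ℤ[Fin r → ℤ]) by push_cast; rfl, natCast_def]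
  simp only [coeff_single, Finsupp.single_apply, eq_comm (a := (0 : Fin r → ℤ))]
  split_ifs <;> push_cast <;> ring

lemma ComplementaryPair.mod_two_identity (hA : IsBinary s A) (hB : IsBinary s B)
    (hAB : ComplementaryPair A B) :
    (ofFinset (indexBox s) : (ZMod 2)[Fin r → ℤ]) * mapRingHom _ (Int.castRingHom (ZMod 2))
      (ofFinset (indexBox s) + (minusOnes s A + minusOnes s B)
        + single (corner s) 1 * invert (minusOnes s A + minusOnes s B))
    = (#(indexBox s) : (ZMod 2)[Fin r → ℤ]) * single (corner s) 1 := by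
  obtain ⟨Y, hY⟩ := exists_mul_eq_natCast_mul_add_two_mul
    (single_corner_mul_invert_ofFinset_indexBox ℤ s) (hAB.intLift_identity hA hB)
  have h2 : (2 : (ZMod 2)[Fin r → ℤ]) = 0 :=
    Nat.cast_two.symm.trans (by rw [natCast_def, ZMod.natCast_self, single_zero])
  simpa [mapRingHom_ofFinset, map_ofNat, h2] using
    congrArg (mapRingHom _ (Int.castRingHom (ZMod 2))) hY

lemma ComplementaryPair.natCast_card_indexBox_eq_zero (hA : IsBinary s A) (hB : IsBinary s B)
    (hAB : ComplementaryPair A B) {k : Fin r} (hk : 1 < s k) :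
    (#(indexBox s) : (ZMod 2)[Fin r → ℤ]) = 0 := by
  obtain ⟨ω, hω, hgeom⟩ :=
    IsAlgClosed.exists_ne_zero_geom_sum_eq_zero (K := AlgebraicClosure (ZMod 2)) hk
  have h := congrArg (evalCoord (Units.mk0 ω hω) k) (hAB.mod_two_identity hA hB)
  rw [map_mul, evalCoord_ofFinset_indexBox _ hgeom, zero_mul, map_mul, evalCoord_single,
    one_smul, eq_comm, mul_eq_zero] at h
  have hN : ((#(indexBox s) : ℕ) : ZMod 2) = 0 := by
    refine (algebraMap (ZMod 2) (AlgebraicClosure (ZMod 2))).injective ?_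
    simpa using h.resolve_right (zpow_ne_zero _ hω)
  rw [← map_natCast (algebraMap (ZMod 2) (ZMod 2)[Fin r → ℤ]), hN, map_zero]

lemma ComplementaryPair.signBit_add_signBit_corner_sub (hA : IsBinary s A)
    (hB : IsBinary s B) (hAB : ComplementaryPair A B) {k : Fin r} (hk : 1 < s k)
    {g : Fin r → ℤ} (hg : g ∈ indexBox s) :
    1 + (signBit (A g) + signBit (B g))
      + (signBit (A (corner s - g)) + signBit (B (corner s - g))) = 0 := by
  classical
  have h := hAB.mod_two_identity hA hB
  rw [hAB.natCast_card_indexBox_eq_zero hA hB hk, zero_mul] at h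
  have hH : (ofFinset (indexBox s) : (ZMod 2)[Fin r → ℤ]) ≠ 0 := fun h0 => by
    simpa [coeff_ofFinset, hg] using congrArg (·.coeff g) h0
  have hG := congrArg (·.coeff g) ((mul_eq_zero.1 h).resolve_left hH)
  simpa [coeff_ofFinset, coeff_invert, hg, neg_add_eq_sub, intCast_coeff_minusOnes hg,
    intCast_coeff_minusOnes (corner_sub_mem_indexBox hg)] using hG

end Binary

/-- symmetry of a nontrivial binary GCA pair:
A[s−1−i]·A[i]·B[s−1−i]·B[i] = −1 for every in-box index i. -/
theorem stmt8 {r : ℕ} (s : Fin r → ℕ) (A B : Arr r)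
    (hA : IsBinary s A) (hB : IsBinary s B) (hAB : ComplementaryPair A B)
    (hnontriv : ∃ k, 1 < s k) :
    ∀ i : Fin r → ℤ, InBox s i →
      A (fun k => (s k : ℤ) - 1 - i k) * A i *
        B (fun k => (s k : ℤ) - 1 - i k) * B i = -1 := by
  intro i hi
  obtain ⟨k, hk⟩ := hnontriv
  have hflip := mem_indexBox.1 (corner_sub_mem_indexBox (mem_indexBox.2 hi))
  exact mul_eq_neg_one_of_signBit (hA.2 i hi) (hB.2 i hi) (hA.2 _ hflip) (hB.2 _ hflip)
    (hAB.signBit_add_signBit_corner_sub hA hB hk (mem_indexBox.2 hi))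
end

section
/- Let {a_1, …, a_{L_1}} be a polyphase Golay sequence set of length M and {b_1, …, b_{L_2}} a polyphase Golay sequence set of length N. For 1 ≤ i ≤ L_1 and 1 ≤ j ≤ L_2 define the M×N matrix C_{ij} = a_i·b_j^T, i.e., C_{ij}[m,n] = a_i[m]·b_j[n]. Then the collection {C_{ij} : 1 ≤ i ≤ L_1, 1 ≤ j ≤ L_2} of L_1·L_2 matrices is a polyphase GCM set of size M×N. -/
open scoped BigOperators

/-! The outer product `C[m,n] = a[m] b[n]` factors both the autocorrelation and the weight, so
the sum over all pairs `(i, j)` of the autocorrelations of `a_i bⱼᵀ` is the product of the two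
complementary sums, `(w_a Δ) · (w_b Δ) = w_a w_b Δ`; the entries of `a_i bⱼᵀ` are products of
roots of unity of orders dividing `N_a` and `N_b`, hence `N_a N_b`-th roots of unity. -/

lemma matPolyphase_outer {M N : ℕ} {a b : ℤ → ℂ} (ha : seqPolyphase M a)
    (hb : seqPolyphase N b) : matPolyphase M N (fun m n => a m * b n) := by
  obtain ⟨ha0, Na, hNa, haN⟩ := ha
  obtain ⟨hb0, Nb, hNb, hbN⟩ := hb
  refine ⟨fun m n hmn => ?_, Na * Nb, Nat.mul_pos hNa hNb, fun m n hmn => ?_⟩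
  · by_cases hm : seqInBox M m
    · have hn : ¬ seqInBox N n := fun hn => hmn ⟨hm.1, hm.2, hn.1, hn.2⟩
      simp [hb0 n hn]
    · simp [ha0 m hm]
  · rw [mul_pow, pow_mul, haN m ⟨hmn.1, hmn.2.1⟩, one_pow, mul_comm Na, pow_mul,
      hbN n ⟨hmn.2.2.1, hmn.2.2.2⟩, one_pow, one_mul]

lemma matAutocorr_outer (a b : ℤ → ℂ) (δ₁ δ₂ : ℤ) :
    matAutocorr (fun m n => a m * b n) δ₁ δ₂ = seqAutocorr a δ₁ * seqAutocorr b δ₂ := by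
  rw [matAutocorr, seqAutocorr, seqAutocorr, finsum_mul]
  simp only [mul_finsum, map_mul]
  exact finsum_congr fun i => finsum_congr fun j => by ring

lemma matWeight_outer (a b : ℤ → ℂ) :
    matWeight (fun m n => a m * b n) = seqWeight a * seqWeight b := by
  rw [matWeight, seqWeight, seqWeight, finsum_mul]
  simp only [mul_finsum, norm_mul, mul_pow]

/-- from a polyphase Golay sequence set {a₁,…,a_{L₁}} of length M and a
polyphase Golay sequence set {b₁,…,b_{L₂}} of length N, the L₁·L₂ matrices
C_{ij}[m,n] = a_i[m]·b_j[n] form a polyphase GCM set of size M×N. -/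
theorem stmt11 (L₁ L₂ M N : ℕ)
    (a : Fin L₁ → ℤ → ℂ) (b : Fin L₂ → ℤ → ℂ)
    (ha : ∀ i, seqPolyphase M (a i)) (hb : ∀ j, seqPolyphase N (b j))
    (hacomp : ∀ δ : ℤ, ∑ i, seqAutocorr (a i) δ =
      if δ = 0 then ((∑ i, seqWeight (a i) : ℝ) : ℂ) else 0)
    (hbcomp : ∀ δ : ℤ, ∑ j, seqAutocorr (b j) δ =
      if δ = 0 then ((∑ j, seqWeight (b j) : ℝ) : ℂ) else 0)
    (C : Fin L₁ → Fin L₂ → ℤ → ℤ → ℂ)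
    (hC : ∀ i j, C i j = fun m n => a i m * b j n) :
    (∀ i j, matPolyphase M N (C i j)) ∧
      ∀ δ₁ δ₂ : ℤ, ∑ i, ∑ j, matAutocorr (C i j) δ₁ δ₂ =
        if δ₁ = 0 ∧ δ₂ = 0 then ((∑ i, ∑ j, matWeight (C i j) : ℝ) : ℂ) else 0 := by
  refine ⟨fun i j => hC i j ▸ matPolyphase_outer (ha i) (hb j), fun δ₁ δ₂ => ?_⟩
  simp only [hC, matAutocorr_outer, matWeight_outer]
  rw [← Finset.sum_mul_sum, hacomp, hbcomp, ite_zero_mul_ite_zero, ← Finset.sum_mul_sum,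
    Complex.ofReal_mul]
end

section
/- Let {A, B, C, D} be a polyphase GCA quad in which A and B have size s_1×⋯×(s_i+1)×⋯×s_r and C and D have size s_1×⋯×s_i×⋯×s_r, for some fixed dimension index i. Define arrays E, F, G, H of size s_1×⋯×(2s_i+1)×⋯×s_r by interleaving alternately in the i-th dimension: E[…, 2k, …] = A[…, k, …] and E[…, 2k+1, …] = 0; G[…, 2k, …] = B[…, k, …] and G[…, 2k+1, …] = 0; F[…, 2k+1, …] = C[…, k, …] and F[…, 2k, …] = 0; H[…, 2k+1, …] = D[…, k, …] and H[…, 2k, …] = 0 (the displayed coordinate being the i-th one, all other coordinates unchanged). Then {E, F, G, H} is a (weight-deficient) GCA quad of size s_1×⋯×(2s_i+1)×⋯×s_r, i.e., R_E + R_F + R_G + R_H = (w(E)+w(F)+w(G)+w(H))·Δ. -/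
open scoped BigOperators

section Aux

lemma finsum_comp_inj {α : Type*} {M : Type*} [AddCommMonoid M] {φ : α → α}
    (hφ : Function.Injective φ) {f : α → M} (h0 : ∀ i, i ∉ Set.range φ → f i = 0) :
    ∑ᶠ i, f i = ∑ᶠ j, f (φ j) := by
  rw [← finsum_mem_range hφ, ← finsum_mem_univ f]
  refine finsum_mem_inter_support_eq' f _ _ fun x hx => ?_
  simp only [Set.mem_univ, true_iff]
  by_contra h
  exact hx (h0 x h)

variable {r : ℕ}

/-- doubling-plus-p map in coordinate i0 -/
private def dbl (i0 : Fin r) (p : ℤ) (j : Fin r → ℤ) : Fin r → ℤ :=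
  Function.update j i0 (2 * j i0 + p)

lemma dbl_inj (i0 : Fin r) (p : ℤ) : Function.Injective (dbl i0 p) := by
  intro x y h
  funext k
  by_cases hk : k = i0
  · subst hk
    have := congrFun h k
    simp only [dbl, Function.update_self] at this
    omega
  · have := congrFun h k
    simpa only [dbl, Function.update_of_ne hk] using this

lemma mem_range_dbl {i0 : Fin r} {p : ℤ} {v : Fin r → ℤ} (hv : v i0 % 2 = p) :
    v ∈ Set.range (dbl i0 p) := by
  refine ⟨Function.update v i0 (v i0 / 2), ?_⟩
  funext k
  by_cases hk : k = i0
  · subst hk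
    simp only [dbl, Function.update_self]
    omega
  · simp [dbl, Function.update_of_ne hk]

lemma interleave_eval {i0 : Fin r} {p : ℤ} (hp : p = 0 ∨ p = 1) (A : Arr r)
    (j : Fin r → ℤ) :
    (if (dbl i0 p j) i0 % 2 = p then A (Function.update (dbl i0 p j) i0 ((dbl i0 p j) i0 / 2)) else 0)
      = A j := by
  have h1 : (dbl i0 p j) i0 = 2 * j i0 + p := Function.update_self _ _ _
  rw [h1, if_pos (by omega)]
  congr 1
  have : (2 * j i0 + p) / 2 = j i0 := by omega
  rw [this]
  simp [dbl, Function.update_idem]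

lemma dbl_sub {i0 : Fin r} {p : ℤ} (j δ : Fin r → ℤ) {d : ℤ} (hδ : δ i0 = 2 * d) :
    dbl i0 p j - δ = dbl i0 p (j - Function.update δ i0 d) := by
  funext k
  by_cases hk : k = i0
  · subst hk
    simp only [dbl, Pi.sub_apply, Function.update_self]
    omega
  · simp [dbl, Function.update_of_ne hk]

lemma interleave_autocorr_even {i0 : Fin r} {p : ℤ} (hp : p = 0 ∨ p = 1)
    (A E : Arr r)
    (hE : E = fun v => if v i0 % 2 = p then A (Function.update v i0 (v i0 / 2)) else 0)
    (δ : Fin r → ℤ) {d : ℤ} (hδ : δ i0 = 2 * d) :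
    autocorr E δ = autocorr A (Function.update δ i0 d) := by
  unfold autocorr
  rw [finsum_comp_inj (dbl_inj i0 p)
      (f := fun i => E i * (starRingEnd ℂ) (E (i - δ)))]
  · refine finsum_congr fun j => ?_
    have h1 : E (dbl i0 p j) = A j := by rw [hE]; exact interleave_eval hp A j
    have h2 : E (dbl i0 p j - δ) = A (j - Function.update δ i0 d) := by
      rw [dbl_sub j δ hδ, hE]
      exact interleave_eval hp A _
    rw [h1, h2]
  · intro i hi
    have : ¬ (i i0 % 2 = p) := fun h => hi (mem_range_dbl h)
    rw [hE]
    simp only [if_neg this, zero_mul]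

lemma interleave_weight {i0 : Fin r} {p : ℤ} (hp : p = 0 ∨ p = 1)
    (A E : Arr r)
    (hE : E = fun v => if v i0 % 2 = p then A (Function.update v i0 (v i0 / 2)) else 0) :
    weight E = weight A := by
  unfold weight
  rw [finsum_comp_inj (dbl_inj i0 p) (f := fun i => ‖E i‖ ^ 2)]
  · refine finsum_congr fun j => ?_
    have h1 : E (dbl i0 p j) = A j := by rw [hE]; exact interleave_eval hp A j
    rw [h1]
  · intro i hi
    have : ¬ (i i0 % 2 = p) := fun h => hi (mem_range_dbl h)
    rw [hE]
    simp [if_neg this]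

lemma interleave_autocorr_odd {i0 : Fin r} {p : ℤ} (hp : p = 0 ∨ p = 1)
    (A E : Arr r)
    (hE : E = fun v => if v i0 % 2 = p then A (Function.update v i0 (v i0 / 2)) else 0)
    (δ : Fin r → ℤ) (hδ : δ i0 % 2 = 1) :
    autocorr E δ = 0 := by
  unfold autocorr
  have : ∀ i : Fin r → ℤ, E i * (starRingEnd ℂ) (E (i - δ)) = 0 := by
    intro i
    by_cases h : i i0 % 2 = p
    · have h2 : ¬ ((i - δ) i0 % 2 = p) := by
        simp only [Pi.sub_apply]; omega
      rw [hE]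
      simp only [if_neg h2, map_zero, mul_zero]
    · rw [hE]
      simp only [if_neg h, zero_mul]
  rw [finsum_congr this, finsum_zero]

end Aux

/-- from a polyphase GCA quad {A,B,C,D} where A,B have size
s₁×⋯×(s_{i0}+1)×⋯×s_r and C,D have size s₁×⋯×s_{i0}×⋯×s_r, the arrays obtained by
interleaving alternately with zeros in the i0-th dimension,
E[…,2k,…] = A[…,k,…], E[…,2k+1,…] = 0; G likewise from B;
F[…,2k+1,…] = C[…,k,…], F[…,2k,…] = 0; H likewise from D,
form a (weight-deficient) GCA quad of size s₁×⋯×(2s_{i0}+1)×⋯×s_r, i.e.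
R_E + R_F + R_G + R_H = (w(E)+w(F)+w(G)+w(H))·Δ. -/
theorem stmt13 {r : ℕ} (s : Fin r → ℕ) (i0 : Fin r) (A B C D : Arr r)
    (hA : IsPolyphase (Function.update s i0 (s i0 + 1)) A)
    (hB : IsPolyphase (Function.update s i0 (s i0 + 1)) B)
    (hC : IsPolyphase s C) (hD : IsPolyphase s D)
    (hquad : ComplementaryQuad A B C D)
    (E F G H : Arr r)
    (hE : E = fun v => if v i0 % 2 = 0 then A (Function.update v i0 (v i0 / 2)) else 0)
    (hG : G = fun v => if v i0 % 2 = 0 then B (Function.update v i0 (v i0 / 2)) else 0)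
    (hF : F = fun v => if v i0 % 2 = 1 then C (Function.update v i0 (v i0 / 2)) else 0)
    (hH : H = fun v => if v i0 % 2 = 1 then D (Function.update v i0 (v i0 / 2)) else 0) :
    ComplementaryQuad E F G H := by
  intro δ
  by_cases hpar : δ i0 % 2 = 0
  · obtain ⟨d, hd⟩ : ∃ d, δ i0 = 2 * d := ⟨δ i0 / 2, by omega⟩
    rw [interleave_autocorr_even (Or.inl rfl) A E hE δ hd,
        interleave_autocorr_even (Or.inl rfl) B G hG δ hd,
        interleave_autocorr_even (Or.inr rfl) C F hF δ hd,
        interleave_autocorr_even (Or.inr rfl) D H hH δ hd,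
        interleave_weight (Or.inl rfl) A E hE,
        interleave_weight (Or.inl rfl) B G hG,
        interleave_weight (Or.inr rfl) C F hF,
        interleave_weight (Or.inr rfl) D H hH]
    have hq := hquad (Function.update δ i0 d)
    by_cases h0 : δ = 0
    · have hd0 : d = 0 := by
        have := congrFun h0 i0
        simp only [Pi.zero_apply] at this
        omega
      have hδ'0 : Function.update δ i0 d = 0 := by
        funext k
        by_cases hk : k = i0
        · subst hk; simp [hd0]
        · rw [Function.update_of_ne hk]
          exact congrFun h0 k
      rw [if_pos hδ'0] at hq
      rw [if_pos h0]
      push_cast at hq ⊢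
      linear_combination hq
    · have hδ'0 : Function.update δ i0 d ≠ 0 := by
        intro h
        apply h0
        funext k
        by_cases hk : k = i0
        · subst hk
          have := congrFun h k
          rw [Function.update_self] at this
          simp only [Pi.zero_apply] at this ⊢
          omega
        · have := congrFun h k
          rwa [Function.update_of_ne hk] at this
      rw [if_neg hδ'0] at hq
      rw [if_neg h0]
      linear_combination hq
  · have hodd : δ i0 % 2 = 1 := by omega
    have hδ0 : δ ≠ 0 := by
      intro h
      have := congrFun h i0
      simp only [Pi.zero_apply] at this
      omega
    rw [interleave_autocorr_odd (Or.inl rfl) A E hE δ hodd,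
        interleave_autocorr_odd (Or.inl rfl) B G hG δ hodd,
        interleave_autocorr_odd (Or.inr rfl) C F hF δ hodd,
        interleave_autocorr_odd (Or.inr rfl) D H hH δ hodd,
        if_neg hδ0]
    ring
end

section
/- Let {A, B, C, D} be a GCA quad in which A and B have size s_1×⋯×s_j×⋯×s_r and C and D have size s_1×⋯×s_j'×⋯×s_r, for some fixed dimension index j. Define arrays E, F, G, H of size s_1×⋯×2(s_j+s_j')×⋯×s_r by concatenation in the j-th dimension: E = A | 0_{s_j'} | 0_{s_j'} | B, G = A | 0_{s_j'} | 0_{s_j'} | (−B), F = 0_{s_j} | C | D | 0_{s_j}, and H = 0_{s_j} | C | (−D) | 0_{s_j}, where 0_u denotes a zero array of extent u in the j-th dimension (and the same extent as the other arrays in every other dimension). Then {E, F, G, H} is a (weight-deficient) GCA quad of size s_1×⋯×2(s_j+s_j')×⋯×s_r, i.e., R_E + R_F + R_G + R_H = (w(E)+w(F)+w(G)+w(H))·Δ. -/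
open scoped BigOperators

section Aux

variable {r : ℕ}

lemma finite_inBox (s : Fin r → ℕ) : {i : Fin r → ℤ | InBox s i}.Finite := by
  apply Set.Finite.subset (Set.Finite.pi (fun k : Fin r => Set.finite_Icc (0:ℤ) (s k)))
  intro i hi
  simp only [Set.mem_pi, Set.mem_univ, Set.mem_Icc, forall_true_left]
  exact fun k => ⟨(hi k).1, le_of_lt (hi k).2⟩

lemma supp_fin {s : Fin r → ℕ} {A : Arr r} (h : SupportedOn s A) :
    (Function.support A).Finite := by
  apply (finite_inBox s).subset
  intro i hi
  by_contra hbox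
  exact hi (h i hbox)

lemma supp_mul_fin {f : Arr r} (hf : (Function.support f).Finite) (c : Arr r) :
    (Function.support fun i => f i * c i).Finite :=
  hf.subset fun _ hi => left_ne_zero_of_mul hi

lemma autocorr_expand_add {f g : Arr r} (hf : (Function.support f).Finite)
    (hg : (Function.support g).Finite) (δ : Fin r → ℤ) :
    autocorr (fun i => f i + g i) δ =
      autocorr f δ + (∑ᶠ i, f i * (starRingEnd ℂ) (g (i - δ)))
        + ((∑ᶠ i, g i * (starRingEnd ℂ) (f (i - δ))) + autocorr g δ) := by
  have h1 : ∀ i : Fin r → ℤ, (f i + g i) * (starRingEnd ℂ) (f (i - δ) + g (i - δ)) =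
      (f i * (starRingEnd ℂ) (f (i - δ)) + f i * (starRingEnd ℂ) (g (i - δ)))
      + (g i * (starRingEnd ℂ) (f (i - δ)) + g i * (starRingEnd ℂ) (g (i - δ))) := by
    intro i; rw [map_add]; ring
  have Hff := supp_mul_fin hf (fun i => (starRingEnd ℂ) (f (i - δ)))
  have Hfg := supp_mul_fin hf (fun i => (starRingEnd ℂ) (g (i - δ)))
  have Hgf := supp_mul_fin hg (fun i => (starRingEnd ℂ) (f (i - δ)))
  have Hgg := supp_mul_fin hg (fun i => (starRingEnd ℂ) (g (i - δ)))
  unfold autocorr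
  rw [finsum_congr h1,
    finsum_add_distrib ((Hff.union Hfg).subset (Function.support_add _ _))
      ((Hgf.union Hgg).subset (Function.support_add _ _)),
    finsum_add_distrib Hff Hfg, finsum_add_distrib Hgf Hgg]

lemma autocorr_expand_sub {f g : Arr r} (hf : (Function.support f).Finite)
    (hg : (Function.support g).Finite) (δ : Fin r → ℤ) :
    autocorr (fun i => f i - g i) δ =
      autocorr f δ - (∑ᶠ i, f i * (starRingEnd ℂ) (g (i - δ)))
        - ((∑ᶠ i, g i * (starRingEnd ℂ) (f (i - δ))) - autocorr g δ) := by
  have h1 : ∀ i : Fin r → ℤ, (f i - g i) * (starRingEnd ℂ) (f (i - δ) - g (i - δ)) =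
      (f i * (starRingEnd ℂ) (f (i - δ)) + -(f i * (starRingEnd ℂ) (g (i - δ))))
      + (-(g i * (starRingEnd ℂ) (f (i - δ))) + g i * (starRingEnd ℂ) (g (i - δ))) := by
    intro i; rw [map_sub]; ring
  have Hff := supp_mul_fin hf (fun i => (starRingEnd ℂ) (f (i - δ)))
  have Hfg := supp_mul_fin hf (fun i => (starRingEnd ℂ) (g (i - δ)))
  have Hgf := supp_mul_fin hg (fun i => (starRingEnd ℂ) (f (i - δ)))
  have Hgg := supp_mul_fin hg (fun i => (starRingEnd ℂ) (g (i - δ)))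
  have Hfg' : (Function.support fun i => -(f i * (starRingEnd ℂ) (g (i - δ)))).Finite := by
    simpa using Hfg
  have Hgf' : (Function.support fun i => -(g i * (starRingEnd ℂ) (f (i - δ)))).Finite := by
    simpa using Hgf
  unfold autocorr
  rw [finsum_congr h1,
    finsum_add_distrib ((Hff.union Hfg').subset (Function.support_add _ _))
      ((Hgf'.union Hgg).subset (Function.support_add _ _)),
    finsum_add_distrib Hff Hfg', finsum_add_distrib Hgf' Hgg,
    finsum_neg_distrib, finsum_neg_distrib]
  ring

/-- The shift-in-one-coordinate equivalence. -/
def shiftEquiv (j0 : Fin r) (T : ℤ) : (Fin r → ℤ) ≃ (Fin r → ℤ) where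
  toFun v := Function.update v j0 (v j0 - T)
  invFun v := Function.update v j0 (v j0 + T)
  left_inv v := by
    funext k
    rcases eq_or_ne k j0 with h | h
    · subst h; simp
    · simp [Function.update_of_ne h]
  right_inv v := by
    funext k
    rcases eq_or_ne k j0 with h | h
    · subst h; simp
    · simp [Function.update_of_ne h]

lemma shift_sub (j0 : Fin r) (T : ℤ) (i δ : Fin r → ℤ) :
    Function.update (i - δ) j0 ((i - δ) j0 - T) =
      Function.update i j0 (i j0 - T) - δ := by
  funext k
  rcases eq_or_ne k j0 with h | h
  · subst h; simp [Pi.sub_apply]; ring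
  · simp [Function.update_of_ne h, Pi.sub_apply]

lemma autocorr_shift (f : Arr r) (j0 : Fin r) (T : ℤ) (δ : Fin r → ℤ) :
    autocorr (fun v => f (Function.update v j0 (v j0 - T))) δ = autocorr f δ := by
  unfold autocorr
  have : ∀ i : Fin r → ℤ,
      f (Function.update i j0 (i j0 - T)) *
        (starRingEnd ℂ) (f (Function.update (i - δ) j0 ((i - δ) j0 - T))) =
      (fun w => f w * (starRingEnd ℂ) (f (w - δ))) (shiftEquiv j0 T i) := by
    intro i
    simp only [shiftEquiv, Equiv.coe_fn_mk, shift_sub]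
  rw [finsum_congr this]
  exact finsum_comp_equiv (shiftEquiv j0 T) (f := fun w => f w * (starRingEnd ℂ) (f (w - δ)))

lemma supp_shift_fin {f : Arr r} (hf : (Function.support f).Finite) (j0 : Fin r) (T : ℤ) :
    (Function.support fun v => f (Function.update v j0 (v j0 - T))).Finite := by
  have : (Function.support fun v => f (Function.update v j0 (v j0 - T))) =
      (shiftEquiv j0 T) ⁻¹' (Function.support f) := rfl
  rw [this]
  exact hf.preimage (Equiv.injective _).injOn

lemma autocorr_zero_eq_weight {f : Arr r} (hf : (Function.support f).Finite) :
    autocorr f 0 = ((weight f : ℝ) : ℂ) := by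
  unfold autocorr weight
  have h1 : ∀ i : Fin r → ℤ, f i * (starRingEnd ℂ) (f (i - 0)) = ((‖f i‖ ^ 2 : ℝ) : ℂ) := by
    intro i
    rw [sub_zero, Complex.mul_conj']
    norm_cast
  rw [finsum_congr h1]
  have hfin : (Function.support fun i : Fin r → ℤ => ‖f i‖ ^ 2).Finite := by
    apply hf.subset
    intro i hi
    simp only [Function.mem_support] at hi ⊢
    intro h0; apply hi; rw [h0]; simp
  exact (Complex.ofRealHom.toAddMonoidHom.map_finsum hfin).symm

end Aux

/-- from a GCA quad {A,B,C,D} where A,B have extent u = s_{j0} and C,D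
have extent u' in dimension j0 (sizes agreeing elsewhere), the concatenations
E = A|0|0|B, G = A|0|0|(−B), F = 0|C|D|0, H = 0|C|(−D)|0 in the j0-th dimension form a
(weight-deficient) GCA quad of size s₁×⋯×2(s_{j0}+u')×⋯×s_r, i.e.
R_E + R_F + R_G + R_H = (w(E)+w(F)+w(G)+w(H))·Δ. -/
theorem stmt14 {r : ℕ} (s : Fin r → ℕ) (j0 : Fin r) (u' : ℕ) (A B C D : Arr r)
    (hA : IsUnimodZero s A) (hB : IsUnimodZero s B)
    (hC : IsUnimodZero (Function.update s j0 u') C)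
    (hD : IsUnimodZero (Function.update s j0 u') D)
    (hquad : ComplementaryQuad A B C D)
    (E F G H : Arr r)
    (hE : E = fun v =>
      if v j0 < (s j0 : ℤ) then A v
      else if v j0 < (s j0 : ℤ) + 2 * (u' : ℤ) then 0
      else B (Function.update v j0 (v j0 - ((s j0 : ℤ) + 2 * (u' : ℤ)))))
    (hG : G = fun v =>
      if v j0 < (s j0 : ℤ) then A v
      else if v j0 < (s j0 : ℤ) + 2 * (u' : ℤ) then 0
      else -B (Function.update v j0 (v j0 - ((s j0 : ℤ) + 2 * (u' : ℤ)))))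
    (hF : F = fun v =>
      if v j0 < (s j0 : ℤ) then 0
      else if v j0 < (s j0 : ℤ) + (u' : ℤ) then
        C (Function.update v j0 (v j0 - (s j0 : ℤ)))
      else if v j0 < (s j0 : ℤ) + 2 * (u' : ℤ) then
        D (Function.update v j0 (v j0 - ((s j0 : ℤ) + (u' : ℤ))))
      else 0)
    (hH : H = fun v =>
      if v j0 < (s j0 : ℤ) then 0
      else if v j0 < (s j0 : ℤ) + (u' : ℤ) then
        C (Function.update v j0 (v j0 - (s j0 : ℤ)))
      else if v j0 < (s j0 : ℤ) + 2 * (u' : ℤ) then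
        -D (Function.update v j0 (v j0 - ((s j0 : ℤ) + (u' : ℤ))))
      else 0) :
    ComplementaryQuad E F G H := by

  classical
  obtain ⟨tB, htB⟩ : ∃ tB : Arr r,
      tB = fun v => B (Function.update v j0 (v j0 - ((s j0 : ℤ) + 2 * (u' : ℤ)))) := ⟨_, rfl⟩
  obtain ⟨tC, htC⟩ : ∃ tC : Arr r,
      tC = fun v => C (Function.update v j0 (v j0 - (s j0 : ℤ))) := ⟨_, rfl⟩
  obtain ⟨tD, htD⟩ : ∃ tD : Arr r,
      tD = fun v => D (Function.update v j0 (v j0 - ((s j0 : ℤ) + (u' : ℤ)))) := ⟨_, rfl⟩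
  have hzA : ∀ w : Fin r → ℤ, w j0 < 0 ∨ (s j0 : ℤ) ≤ w j0 → A w = 0 := by
    intro w hw; apply hA.1; intro hbox; have h := hbox j0
    rcases hw with h' | h' <;> omega
  have hzB : ∀ w : Fin r → ℤ, w j0 < 0 ∨ (s j0 : ℤ) ≤ w j0 → B w = 0 := by
    intro w hw; apply hB.1; intro hbox; have h := hbox j0
    rcases hw with h' | h' <;> omega
  have hzC : ∀ w : Fin r → ℤ, w j0 < 0 ∨ (u' : ℤ) ≤ w j0 → C w = 0 := by
    intro w hw; apply hC.1; intro hbox; have h := hbox j0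
    rw [Function.update_self] at h
    rcases hw with h' | h' <;> omega
  have hzD : ∀ w : Fin r → ℤ, w j0 < 0 ∨ (u' : ℤ) ≤ w j0 → D w = 0 := by
    intro w hw; apply hD.1; intro hbox; have h := hbox j0
    rw [Function.update_self] at h
    rcases hw with h' | h' <;> omega
  have hfA := supp_fin hA.1
  have hfB := supp_fin hB.1
  have hfC := supp_fin hC.1
  have hfD := supp_fin hD.1
  have hftB : (Function.support tB).Finite := by
    rw [htB]; exact supp_shift_fin hfB j0 _
  have hftC : (Function.support tC).Finite := by
    rw [htC]; exact supp_shift_fin hfC j0 _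
  have hftD : (Function.support tD).Finite := by
    rw [htD]; exact supp_shift_fin hfD j0 _
  have hEfun : E = fun i => A i + tB i := by
    funext v
    simp only [hE, htB]
    have hb1 : v j0 < (s j0 : ℤ) + 2 * (u' : ℤ) →
        B (Function.update v j0 (v j0 - ((s j0 : ℤ) + 2 * (u' : ℤ)))) = 0 := by
      intro h; exact hzB _ (Or.inl (by rw [Function.update_self]; omega))
    by_cases h1 : v j0 < (s j0 : ℤ)
    · rw [if_pos h1, hb1 (by omega), add_zero]
    · rw [if_neg h1]
      have ha : A v = 0 := hzA v (Or.inr (by omega))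
      by_cases h2 : v j0 < (s j0 : ℤ) + 2 * (u' : ℤ)
      · rw [if_pos h2, ha, hb1 h2, add_zero]
      · rw [if_neg h2, ha, zero_add]
  have hGfun : G = fun i => A i - tB i := by
    funext v
    simp only [hG, htB]
    have hb1 : v j0 < (s j0 : ℤ) + 2 * (u' : ℤ) →
        B (Function.update v j0 (v j0 - ((s j0 : ℤ) + 2 * (u' : ℤ)))) = 0 := by
      intro h; exact hzB _ (Or.inl (by rw [Function.update_self]; omega))
    by_cases h1 : v j0 < (s j0 : ℤ)
    · rw [if_pos h1, hb1 (by omega), sub_zero]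
    · rw [if_neg h1]
      have ha : A v = 0 := hzA v (Or.inr (by omega))
      by_cases h2 : v j0 < (s j0 : ℤ) + 2 * (u' : ℤ)
      · rw [if_pos h2, ha, hb1 h2, sub_zero]
      · rw [if_neg h2, ha, zero_sub]
  have hFfun : F = fun i => tC i + tD i := by
    funext v
    simp only [hF, htC, htD]
    have hc1 : v j0 < (s j0 : ℤ) ∨ (s j0 : ℤ) + (u' : ℤ) ≤ v j0 →
        C (Function.update v j0 (v j0 - (s j0 : ℤ))) = 0 := by
      intro h
      apply hzC
      rcases h with h | h
      · exact Or.inl (by rw [Function.update_self]; omega)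
      · exact Or.inr (by rw [Function.update_self]; omega)
    have hd1 : v j0 < (s j0 : ℤ) + (u' : ℤ) ∨ (s j0 : ℤ) + 2 * (u' : ℤ) ≤ v j0 →
        D (Function.update v j0 (v j0 - ((s j0 : ℤ) + (u' : ℤ)))) = 0 := by
      intro h
      apply hzD
      rcases h with h | h
      · exact Or.inl (by rw [Function.update_self]; omega)
      · exact Or.inr (by rw [Function.update_self]; omega)
    by_cases h1 : v j0 < (s j0 : ℤ)
    · rw [if_pos h1, hc1 (Or.inl h1), hd1 (Or.inl (by omega)), add_zero]
    · rw [if_neg h1]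
      by_cases h2 : v j0 < (s j0 : ℤ) + (u' : ℤ)
      · rw [if_pos h2, hd1 (Or.inl h2), add_zero]
      · rw [if_neg h2]
        by_cases h3 : v j0 < (s j0 : ℤ) + 2 * (u' : ℤ)
        · rw [if_pos h3, hc1 (Or.inr (by omega)), zero_add]
        · rw [if_neg h3, hc1 (Or.inr (by omega)), hd1 (Or.inr (by omega)), add_zero]
  have hHfun : H = fun i => tC i - tD i := by
    funext v
    simp only [hH, htC, htD]
    have hc1 : v j0 < (s j0 : ℤ) ∨ (s j0 : ℤ) + (u' : ℤ) ≤ v j0 →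
        C (Function.update v j0 (v j0 - (s j0 : ℤ))) = 0 := by
      intro h
      apply hzC
      rcases h with h | h
      · exact Or.inl (by rw [Function.update_self]; omega)
      · exact Or.inr (by rw [Function.update_self]; omega)
    have hd1 : v j0 < (s j0 : ℤ) + (u' : ℤ) ∨ (s j0 : ℤ) + 2 * (u' : ℤ) ≤ v j0 →
        D (Function.update v j0 (v j0 - ((s j0 : ℤ) + (u' : ℤ)))) = 0 := by
      intro h
      apply hzD
      rcases h with h | h
      · exact Or.inl (by rw [Function.update_self]; omega)
      · exact Or.inr (by rw [Function.update_self]; omega)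
    by_cases h1 : v j0 < (s j0 : ℤ)
    · rw [if_pos h1, hc1 (Or.inl h1), hd1 (Or.inl (by omega)), sub_zero]
    · rw [if_neg h1]
      by_cases h2 : v j0 < (s j0 : ℤ) + (u' : ℤ)
      · rw [if_pos h2, hd1 (Or.inl h2), sub_zero]
      · rw [if_neg h2]
        by_cases h3 : v j0 < (s j0 : ℤ) + 2 * (u' : ℤ)
        · rw [if_pos h3, hc1 (Or.inr (by omega)), zero_sub]
        · rw [if_neg h3, hc1 (Or.inr (by omega)), hd1 (Or.inr (by omega)), sub_zero]
  have haB : ∀ δ : Fin r → ℤ, autocorr tB δ = autocorr B δ := by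
    intro δ; rw [htB]; exact autocorr_shift B j0 _ δ
  have haC : ∀ δ : Fin r → ℤ, autocorr tC δ = autocorr C δ := by
    intro δ; rw [htC]; exact autocorr_shift C j0 _ δ
  have haD : ∀ δ : Fin r → ℤ, autocorr tD δ = autocorr D δ := by
    intro δ; rw [htD]; exact autocorr_shift D j0 _ δ
  have hEG : ∀ δ : Fin r → ℤ, autocorr E δ + autocorr G δ =
      2 * autocorr A δ + 2 * autocorr B δ := by
    intro δ
    rw [hEfun, hGfun, autocorr_expand_add hfA hftB δ, autocorr_expand_sub hfA hftB δ, haB δ]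
    ring
  have hFH : ∀ δ : Fin r → ℤ, autocorr F δ + autocorr H δ =
      2 * autocorr C δ + 2 * autocorr D δ := by
    intro δ
    rw [hFfun, hHfun, autocorr_expand_add hftC hftD δ, autocorr_expand_sub hftC hftD δ,
      haC δ, haD δ]
    ring
  have key : ∀ δ : Fin r → ℤ, autocorr E δ + autocorr F δ + autocorr G δ + autocorr H δ =
      2 * (if δ = 0 then ((weight A + weight B + weight C + weight D : ℝ) : ℂ) else 0) := by
    intro δ
    have h12 := hEG δ
    have h34 := hFH δ
    have hq := hquad δ
    calc autocorr E δ + autocorr F δ + autocorr G δ + autocorr H δ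
        = (autocorr E δ + autocorr G δ) + (autocorr F δ + autocorr H δ) := by ring
      _ = 2 * (autocorr A δ + autocorr B δ + autocorr C δ + autocorr D δ) := by
          rw [h12, h34]; ring
      _ = 2 * (if δ = 0 then ((weight A + weight B + weight C + weight D : ℝ) : ℂ) else 0) := by
          rw [hq]
  have hfE : (Function.support E).Finite := by
    rw [hEfun]; exact (hfA.union hftB).subset (Function.support_add _ _)
  have hfG : (Function.support G).Finite := by
    rw [hGfun]; exact (hfA.union hftB).subset (Function.support_sub _ _)
  have hfF : (Function.support F).Finite := by
    rw [hFfun]; exact (hftC.union hftD).subset (Function.support_add _ _)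
  have hfH : (Function.support H).Finite := by
    rw [hHfun]; exact (hftC.union hftD).subset (Function.support_sub _ _)
  intro δ
  rw [key δ]
  by_cases h : δ = 0
  · rw [if_pos h, if_pos h]
    have k0 := key 0
    rw [if_pos rfl, autocorr_zero_eq_weight hfE, autocorr_zero_eq_weight hfF,
      autocorr_zero_eq_weight hfG, autocorr_zero_eq_weight hfH] at k0
    push_cast at k0 ⊢
    linear_combination -k0
  · rw [if_neg h, if_neg h, mul_zero]
end
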